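/- arXiv:2105.09039 — 5 statements merged into one kernel-verified Lean document; each statement's English description precedes it below -/
import Mathlib

section
/- Assume additionally f^u(x,0,0) = f^v(x,0,0) = 0 for all x ∈ [0,1]. There exists a constant γ ≥ 1, depending only on l_F and l, such that for every bounded classical solution (u,v) of the semilinear system on [0,1] × [0,∞) and every T ≥ 0, sup{ max(|u(x,t)|, |v(x,t)|) : x ∈ [0,1], t ≥ τ^u(T;x) } ≤ γ · sup{ max(|u(0,t)|, |v(0,t)|) : t ≥ T }. -/
open Set MeasureTheory intervalIntegral Filter

noncomputable section

/-- Regularity, positivity and global Lipschitz assumptions on the data of the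
semilinear 2×2 hyperbolic system: speeds `lu, lv` are continuous and bounded below
by `1/l`, and the source terms `fu, fv` are continuous and globally Lipschitz in the
state `(u,v)` (sup norm) with constant `lF`, uniformly in `x`. -/
def SemilinearData (lu lv : ℝ → ℝ) (fu fv : ℝ → ℝ → ℝ → ℝ) (l lF : ℝ) : Prop :=
  0 < l ∧
  ContinuousOn lu (Icc (0:ℝ) 1) ∧ ContinuousOn lv (Icc (0:ℝ) 1) ∧
  (∀ x ∈ Icc (0:ℝ) 1, 1 / l ≤ lu x) ∧ (∀ x ∈ Icc (0:ℝ) 1, 1 / l ≤ lv x) ∧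
  ContinuousOn (fun p : ℝ × ℝ × ℝ => fu p.1 p.2.1 p.2.2)
    (Icc (0:ℝ) 1 ×ˢ (univ : Set (ℝ × ℝ))) ∧
  ContinuousOn (fun p : ℝ × ℝ × ℝ => fv p.1 p.2.1 p.2.2)
    (Icc (0:ℝ) 1 ×ˢ (univ : Set (ℝ × ℝ))) ∧
  (∀ x ∈ Icc (0:ℝ) 1, ∀ a b a' b' : ℝ,
    |fu x a b - fu x a' b'| ≤ lF * max |a - a'| |b - b'|) ∧
  (∀ x ∈ Icc (0:ℝ) 1, ∀ a b a' b' : ℝ,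
    |fv x a b - fv x a' b'| ≤ lF * max |a - a'| |b - b'|)

/-- Classical (C¹) solution of the semilinear system
`u_t = -lu u_x + fu(x,u,v)`, `v_t = lv v_x + fv(x,u,v)` on `[0,1] × I`,
with explicit partial-derivative functions `ux, ut, vx, vt` that are continuous
on the domain. -/
def IsSemilinearSolution (lu lv : ℝ → ℝ) (fu fv : ℝ → ℝ → ℝ → ℝ) (I : Set ℝ)
    (u v ux ut vx vt : ℝ → ℝ → ℝ) : Prop :=
  (∀ x ∈ Icc (0:ℝ) 1, ∀ t ∈ I,
    HasDerivAt (fun y => u y t) (ux x t) x ∧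
    HasDerivAt (fun s => u x s) (ut x t) t ∧
    HasDerivAt (fun y => v y t) (vx x t) x ∧
    HasDerivAt (fun s => v x s) (vt x t) t ∧
    ut x t = -lu x * ux x t + fu x (u x t) (v x t) ∧
    vt x t = lv x * vx x t + fv x (u x t) (v x t)) ∧
  ContinuousOn (fun p : ℝ × ℝ => ux p.1 p.2) (Icc (0:ℝ) 1 ×ˢ I) ∧
  ContinuousOn (fun p : ℝ × ℝ => ut p.1 p.2) (Icc (0:ℝ) 1 ×ˢ I) ∧
  ContinuousOn (fun p : ℝ × ℝ => vx p.1 p.2) (Icc (0:ℝ) 1 ×ˢ I) ∧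
  ContinuousOn (fun p : ℝ × ℝ => vt p.1 p.2) (Icc (0:ℝ) 1 ×ˢ I)


lemma my_partial_fderiv
    (w wx wt : ℝ → ℝ → ℝ) (A B : Set ℝ) (hA : Convex ℝ A)
    (hdx : ∀ p ∈ A ×ˢ B, HasDerivAt (fun y => w y p.2) (wx p.1 p.2) p.1)
    (hdt : ∀ p ∈ A ×ˢ B, HasDerivAt (fun s => w p.1 s) (wt p.1 p.2) p.2)
    (hcx : ContinuousOn (fun p : ℝ × ℝ => wx p.1 p.2) (A ×ˢ B))
    (p : ℝ × ℝ) (hp : p ∈ A ×ˢ B) :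
    HasFDerivWithinAt (fun q : ℝ × ℝ => w q.1 q.2)
      (wx p.1 p.2 • ContinuousLinearMap.fst ℝ ℝ ℝ +
       wt p.1 p.2 • ContinuousLinearMap.snd ℝ ℝ ℝ) (A ×ˢ B) p := by
  obtain ⟨x, t⟩ := p
  obtain ⟨hx, ht⟩ := hp
  apply HasFDerivAtFilter.of_isLittleO
  rw [Asymptotics.isLittleO_iff]
  intro ε hε
  have hε2 : 0 < ε / 2 := by linarith
  -- from the t-derivative at (x,t)
  have h1 := Asymptotics.isLittleO_iff.1 (hasDerivAt_iff_isLittleO.1 (hdt (x, t) ⟨hx, ht⟩)) hε2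
  rw [Metric.eventually_nhds_iff] at h1
  obtain ⟨δ1, hδ1, H1⟩ := h1
  -- continuity of wx within the set
  have h2 := Metric.continuousWithinAt_iff.1 (hcx (x, t) ⟨hx, ht⟩) (ε / 2) hε2
  obtain ⟨δ2, hδ2, H2⟩ := h2
  rw [Filter.prod_pure, Filter.eventually_map]
  rw [Metric.nhdsWithin_basis_ball.eventually_iff]
  refine ⟨min δ1 δ2, lt_min hδ1 hδ2, ?_⟩
  rintro ⟨y, s⟩ ⟨hq, hy, hs⟩
  rw [Metric.mem_ball, Prod.dist_eq] at hq
  simp only [lt_min_iff, max_lt_iff] at hq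
  obtain ⟨⟨hd11, hd21⟩, hd12, hd22⟩ := hq
  have hst : dist s t < δ1 := hd21
  -- second term
  have T2 : |w x s - w x t - wt x t * (s - t)| ≤ ε / 2 * |s - t| := by
    have := H1 (show dist s t < δ1 from hst)
    simpa [Real.norm_eq_abs, mul_comm] using this
  -- first term, via MVT on the segment from x to y at fixed time s
  have T1 : |w y s - w x s - wx x t * (y - x)| ≤ ε / 2 * |y - x| := by
    have hseg : segment ℝ x y ⊆ A := hA.segment_subset hx hy
    have key : ∀ z ∈ segment ℝ x y,
        HasDerivWithinAt (fun z => w z s - wx x t * z) (wx z s - wx x t) (segment ℝ x y) z := by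
      intro z hz
      have hzA : z ∈ A := hseg hz
      have := (hdx (z, s) ⟨hzA, hs⟩).sub ((hasDerivAt_id z).const_mul (wx x t))
      have h' := this.hasDerivWithinAt (s := segment ℝ x y)
      rw [mul_one] at h'
      exact h'
    have bound : ∀ z ∈ segment ℝ x y, ‖wx z s - wx x t‖ ≤ ε / 2 := by
      intro z hz
      have hzA : z ∈ A := hseg hz
      have hzx : |z - x| ≤ |y - x| := by
        rw [segment_eq_uIcc] at hz
        rcases le_total x y with h | h
        · rw [uIcc_of_le h] at hz
          rw [abs_of_nonneg (by linarith [hz.1]), abs_of_nonneg (by linarith)]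
          linarith [hz.2]
        · rw [uIcc_of_ge h] at hz
          rw [abs_of_nonpos (by linarith [hz.2]), abs_of_nonpos (by linarith)]
          linarith [hz.1]
      have hdist : dist (z, s) (x, t) < δ2 := by
        rw [Prod.dist_eq]
        exact max_lt (lt_of_le_of_lt (by simpa [Real.dist_eq] using hzx) hd12) hd22
      have := H2 (show (z, s) ∈ A ×ˢ B from ⟨hzA, hs⟩) hdist
      simpa [Real.dist_eq, Real.norm_eq_abs] using this.le
    have := Convex.norm_image_sub_le_of_norm_hasDerivWithin_le key bound (convex_segment x y)
      (left_mem_segment ℝ x y) (right_mem_segment ℝ x y)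
    calc |w y s - w x s - wx x t * (y - x)|
        = ‖(w y s - wx x t * y) - (w x s - wx x t * x)‖ := by
          rw [Real.norm_eq_abs]; ring_nf
      _ ≤ ε / 2 * ‖y - x‖ := this
      _ = ε / 2 * |y - x| := by rw [Real.norm_eq_abs]
  have hnorm : ‖(y, s) - (x, t)‖ = max |y - x| |s - t| := by
    simp [Prod.norm_def, Real.norm_eq_abs]
  calc ‖w y s - w x t -
        ((wx x t • ContinuousLinearMap.fst ℝ ℝ ℝ +
          wt x t • ContinuousLinearMap.snd ℝ ℝ ℝ) ((y, s) - (x, t)))‖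
      = |(w y s - w x s - wx x t * (y - x)) + (w x s - w x t - wt x t * (s - t))| := by
        simp [Real.norm_eq_abs, ContinuousLinearMap.add_apply, ContinuousLinearMap.smul_apply,
          Prod.fst_sub, Prod.snd_sub, smul_eq_mul]
        ring_nf
    _ ≤ |w y s - w x s - wx x t * (y - x)| + |w x s - w x t - wt x t * (s - t)| := abs_add_le _ _
    _ ≤ ε / 2 * |y - x| + ε / 2 * |s - t| := add_le_add T1 T2
    _ ≤ ε / 2 * max |y - x| |s - t| + ε / 2 * max |y - x| |s - t| := by
        gcongr <;> [exact le_max_left _ _; exact le_max_right _ _]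
    _ = ε * max |y - x| |s - t| := by ring
    _ = ε * ‖(y, s) - (x, t)‖ := by rw [hnorm]

lemma my_curve_bound (w wx wt : ℝ → ℝ → ℝ)
    (hdx : ∀ p ∈ Icc (0:ℝ) 1 ×ˢ Ici (0:ℝ), HasDerivAt (fun y => w y p.2) (wx p.1 p.2) p.1)
    (hdt : ∀ p ∈ Icc (0:ℝ) 1 ×ˢ Ici (0:ℝ), HasDerivAt (fun s => w p.1 s) (wt p.1 p.2) p.2)
    (hcx : ContinuousOn (fun p : ℝ × ℝ => wx p.1 p.2) (Icc (0:ℝ) 1 ×ˢ Ici (0:ℝ)))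
    (hct : ContinuousOn (fun p : ℝ × ℝ => wt p.1 p.2) (Icc (0:ℝ) 1 ×ˢ Ici (0:ℝ)))
    (x : ℝ) (hx : x ∈ Icc (0:ℝ) 1)
    (σ σ' : ℝ → ℝ) (hσ : ∀ z, HasDerivAt σ (σ' z) z) (hσ' : Continuous σ')
    (hσ0 : ∀ z ∈ Icc (0:ℝ) x, 0 ≤ σ z)
    (h : ℝ → ℝ) (hh : Continuous h)
    (hbound : ∀ z ∈ Icc (0:ℝ) x, |wx z (σ z) + wt z (σ z) * σ' z| ≤ h z) :
    |w x (σ x)| ≤ |w 0 (σ 0)| + ∫ z in (0:ℝ)..x, h z := by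
  have hx0 : (0:ℝ) ≤ x := hx.1
  have hσc : Continuous σ := by
    rw [continuous_iff_continuousAt]; exact fun z => (hσ z).continuousAt
  have hmaps : MapsTo (fun z => (z, σ z)) (Icc (0:ℝ) x) (Icc (0:ℝ) 1 ×ˢ Ici (0:ℝ)) := by
    intro z hz
    exact ⟨⟨hz.1, hz.2.trans hx.2⟩, hσ0 z hz⟩
  set W : ℝ → ℝ := fun z => w z (σ z) with hW_def
  set W' : ℝ → ℝ := fun z => wx z (σ z) + wt z (σ z) * σ' z with hW'_def
  have hW : ∀ z ∈ Icc (0:ℝ) x, HasDerivWithinAt W (W' z) (Icc (0:ℝ) x) z := by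
    intro z hz
    have hmem := hmaps hz
    have hL := my_partial_fderiv w wx wt (Icc (0:ℝ) 1) (Ici (0:ℝ)) (convex_Icc 0 1)
      hdx hdt hcx (z, σ z) hmem
    have hcurve : HasDerivWithinAt (fun z => (z, σ z)) ((1:ℝ), σ' z) (Icc (0:ℝ) x) z :=
      (hasDerivWithinAt_id z _).prodMk (hσ z).hasDerivWithinAt
    have := hL.comp_hasDerivWithinAt z hcurve hmaps
    simp [Function.comp, ContinuousLinearMap.add_apply, ContinuousLinearMap.smul_apply,
      smul_eq_mul, mul_comm] at this
    exact this
  have contW : ContinuousOn W (Icc (0:ℝ) x) := fun z hz => (hW z hz).continuousWithinAt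
  have contW' : ContinuousOn W' (Icc (0:ℝ) x) := by
    have hcur : ContinuousOn (fun z => (z, σ z)) (Icc (0:ℝ) x) :=
      (continuous_id.prodMk hσc).continuousOn
    exact ((hcx.comp hcur hmaps).add ((hct.comp hcur hmaps).mul hσ'.continuousOn))
  have hint : IntervalIntegrable W' volume 0 x := by
    apply ContinuousOn.intervalIntegrable
    rwa [uIcc_of_le hx0]
  have key : ∫ z in (0:ℝ)..x, W' z = W x - W 0 := by
    apply integral_eq_sub_of_hasDeriv_right_of_le hx0 contW _ hint
    intro z hz
    exact ((hW z (Ioo_subset_Icc_self hz)).hasDerivAt (Icc_mem_nhds hz.1 hz.2)).hasDerivWithinAt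
  have hhnonneg : (0:ℝ) ≤ ∫ z in (0:ℝ)..x, h z := by
    apply intervalIntegral.integral_nonneg hx0
    exact fun z hz => le_trans (abs_nonneg _) (hbound z hz)
  have hIb : |∫ z in (0:ℝ)..x, W' z| ≤ ∫ z in (0:ℝ)..x, h z := by
    have := intervalIntegral.norm_integral_le_abs_of_norm_le (μ := volume) (f := W') (a := 0) (b := x)
      (g := h) ?_ (hh.intervalIntegrable 0 x)
    · rwa [Real.norm_eq_abs, abs_of_nonneg hhnonneg] at this
    · filter_upwards [self_mem_ae_restrict measurableSet_uIoc] with z hz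
      rw [Real.norm_eq_abs]
      refine hbound z ?_
      rw [uIoc_of_le hx0] at hz
      exact ⟨hz.1.le, hz.2⟩
  have : W x = W 0 + ∫ z in (0:ℝ)..x, W' z := by linarith [key]
  calc |W x| = |W 0 + ∫ z in (0:ℝ)..x, W' z| := by rw [← this]
    _ ≤ |W 0| + |∫ z in (0:ℝ)..x, W' z| := abs_add_le _ _
    _ ≤ |W 0| + ∫ z in (0:ℝ)..x, h z := by linarith [hIb]

lemma my_Qstep (B M c x : ℝ) (n : ℕ) :
    B + ∫ z in (0:ℝ)..x,
        c * (B * ∑ k ∈ Finset.range n, (c*z)^k / (k.factorial : ℝ)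
             + M * ((c*z)^n / (n.factorial : ℝ)))
      = B * ∑ k ∈ Finset.range (n+1), (c*x)^k / (k.factorial : ℝ)
        + M * ((c*x)^(n+1) / ((n+1).factorial : ℝ)) := by
  have integrand_eq : ∀ z : ℝ,
      c * (B * ∑ k ∈ Finset.range n, (c*z)^k / (k.factorial : ℝ)
           + M * ((c*z)^n / (n.factorial : ℝ)))
      = (∑ k ∈ Finset.range n, (B * c^(k+1) / (k.factorial : ℝ)) * z^k)
        + (M * c^(n+1) / (n.factorial : ℝ)) * z^n := by
    intro z
    rw [mul_add, ← mul_assoc, Finset.mul_sum]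
    congr 1
    · refine Finset.sum_congr rfl (fun k _ => ?_)
      rw [mul_pow]; ring
    · rw [mul_pow]; ring
  have hInt : ∀ k : ℕ, ∀ a : ℝ, IntervalIntegrable (fun z : ℝ => a * z^k) volume 0 x := by
    intro k a
    exact (Continuous.intervalIntegrable (by continuity) 0 x)
  have step1 : (∫ z in (0:ℝ)..x,
      c * (B * ∑ k ∈ Finset.range n, (c*z)^k / (k.factorial : ℝ)
           + M * ((c*z)^n / (n.factorial : ℝ))))
      = (∑ k ∈ Finset.range n, (B * c^(k+1) / (k.factorial : ℝ)) * (x^(k+1) / (k+1)))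
        + (M * c^(n+1) / (n.factorial : ℝ)) * (x^(n+1) / (n+1)) := by
    rw [intervalIntegral.integral_congr (g := fun z =>
        (∑ k ∈ Finset.range n, (B * c^(k+1) / (k.factorial : ℝ)) * z^k)
        + (M * c^(n+1) / (n.factorial : ℝ)) * z^n)
        (fun z _ => integrand_eq z)]
    rw [intervalIntegral.integral_add
        (Continuous.intervalIntegrable (continuous_finset_sum _ (fun k _ => by continuity)) 0 x)
        (hInt n _)]
    rw [intervalIntegral.integral_finset_sum (fun k _ => hInt k _)]
    congr 1
    · refine Finset.sum_congr rfl (fun k _ => ?_)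
      rw [intervalIntegral.integral_const_mul, integral_pow]
      norm_num
    · rw [intervalIntegral.integral_const_mul, integral_pow]
      norm_num
  rw [step1, Finset.sum_range_succ']
  have hfact : ∀ k : ℕ, ((k+1).factorial : ℝ) = (k+1) * (k.factorial : ℝ) := by
    intro k
    rw [Nat.factorial_succ]; push_cast; ring
  have term_eq : ∀ k : ℕ, B * ((c*x)^(k+1) / ((k+1).factorial : ℝ))
      = (B * c^(k+1) / (k.factorial : ℝ)) * (x^(k+1) / (k+1)) := by
    intro k
    rw [hfact k, mul_pow]
    have h1 : (k.factorial : ℝ) ≠ 0 := Nat.cast_ne_zero.2 k.factorial_ne_zero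
    have h2 : ((k:ℝ)+1) ≠ 0 := by positivity
    field_simp
  have term_eqM : M * ((c*x)^(n+1) / ((n+1).factorial : ℝ))
      = (M * c^(n+1) / (n.factorial : ℝ)) * (x^(n+1) / (n+1)) := by
    rw [hfact n, mul_pow]
    have h1 : (n.factorial : ℝ) ≠ 0 := Nat.cast_ne_zero.2 n.factorial_ne_zero
    have h2 : ((n:ℝ)+1) ≠ 0 := by positivity
    field_simp
  rw [mul_add, Finset.mul_sum, term_eqM]
  simp only [term_eq]
  norm_num [Nat.factorial_zero]
  ring

/-- inequality (27): if additionally `f^u(x,0,0) = f^v(x,0,0) = 0`,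
there is a constant `γ ≥ 1`, depending only on the Lipschitz constant `lF` and the
speed bound `l`, such that every bounded classical solution of the semilinear system
on `[0,1] × [0,∞)` satisfies, for every `T ≥ 0`,
`sup { max(|u(x,t)|,|v(x,t)|) : x ∈ [0,1], t ≥ τ^u(T;x) } ≤ γ · sup_{t ≥ T} max(|u(0,t)|,|v(0,t)|)`,
where `τ^u(T;x) = T + ∫_0^x dξ/λ^u(ξ)`.  The suprema are expressed via an arbitrary
upper bound `B` of the boundary values. -/
theorem statement3 (l lF : ℝ) (hl : 0 < l) :
    ∃ γ : ℝ, 1 ≤ γ ∧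
      ∀ (lu lv : ℝ → ℝ) (fu fv : ℝ → ℝ → ℝ → ℝ)
        (u v ux ut vx vt : ℝ → ℝ → ℝ),
        SemilinearData lu lv fu fv l lF →
        (∀ x ∈ Icc (0:ℝ) 1, fu x 0 0 = 0 ∧ fv x 0 0 = 0) →
        IsSemilinearSolution lu lv fu fv (Ici 0) u v ux ut vx vt →
        (∃ M : ℝ, ∀ x ∈ Icc (0:ℝ) 1, ∀ t ∈ Ici (0:ℝ), max |u x t| |v x t| ≤ M) →
        ∀ T : ℝ, 0 ≤ T →
          ∀ B : ℝ, (∀ t : ℝ, T ≤ t → max |u 0 t| |v 0 t| ≤ B) →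
            ∀ x ∈ Icc (0:ℝ) 1, ∀ t : ℝ,
              T + (∫ ξ in (0:ℝ)..x, (lu ξ)⁻¹) ≤ t →
              max |u x t| |v x t| ≤ γ * B := by
  classical
  set c0 : ℝ := max lF 0 with hc0_def
  set c : ℝ := l * c0 with hc_def
  have hc0nn : 0 ≤ c0 := le_max_right _ _
  have hlFc0 : lF ≤ c0 := le_max_left _ _
  have hcnn : 0 ≤ c := mul_nonneg hl.le hc0nn
  refine ⟨Real.exp c, Real.one_le_exp hcnn, ?_⟩
  intro lu lv fu fv u v ux ut vx vt hdata hzero hsol hbdd T hT B hB x hx t ht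
  obtain ⟨M, hM⟩ := hbdd
  obtain ⟨hl0, hluc, hlvc, hlub, hlvb, hfuc, hfvc, hfuL, hfvL⟩ := hdata
  obtain ⟨hpde, hcux, hcut, hcvx, hcvt⟩ := hsol
  -- projection onto [0,1] and regularized speeds
  set π : ℝ → ℝ := fun z => max 0 (min 1 z) with hπ_def
  have hπc : Continuous π := continuous_const.max (continuous_const.min continuous_id)
  have hπmem : ∀ z, π z ∈ Icc (0:ℝ) 1 :=
    fun z => ⟨le_max_left _ _, max_le zero_le_one (min_le_left _ _)⟩
  have hπid : ∀ z ∈ Icc (0:ℝ) 1, π z = z := by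
    intro z hz
    simp only [hπ_def]
    rw [min_eq_right hz.2, max_eq_right hz.1]
  set gu : ℝ → ℝ := fun z => (lu (π z))⁻¹ with hgu_def
  set gv : ℝ → ℝ := fun z => (lv (π z))⁻¹ with hgv_def
  have hlinv : (0:ℝ) < 1 / l := by positivity
  have hlupos : ∀ z, 0 < lu (π z) := fun z => lt_of_lt_of_le hlinv (hlub _ (hπmem z))
  have hlvpos : ∀ z, 0 < lv (π z) := fun z => lt_of_lt_of_le hlinv (hlvb _ (hπmem z))
  have hguc : Continuous gu :=
    (hluc.comp_continuous hπc hπmem).inv₀ (fun z => (hlupos z).ne')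
  have hgvc : Continuous gv :=
    (hlvc.comp_continuous hπc hπmem).inv₀ (fun z => (hlvpos z).ne')
  have hgupos : ∀ z, 0 < gu z := fun z => inv_pos.2 (hlupos z)
  have hgvpos : ∀ z, 0 < gv z := fun z => inv_pos.2 (hlvpos z)
  have hgule : ∀ z, gu z ≤ l := by
    intro z
    simp only [hgu_def]
    calc (lu (π z))⁻¹ ≤ (1/l)⁻¹ := by
          apply inv_anti₀ hlinv (hlub _ (hπmem z))
      _ = l := by rw [one_div, inv_inv]
  have hgvle : ∀ z, gv z ≤ l := by
    intro z
    simp only [hgv_def]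
    calc (lv (π z))⁻¹ ≤ (1/l)⁻¹ := by
          apply inv_anti₀ hlinv (hlvb _ (hπmem z))
      _ = l := by rw [one_div, inv_inv]
  -- travel time functions
  set Iu : ℝ → ℝ := fun z => ∫ ξ in (0:ℝ)..z, gu ξ with hIu_def
  set Iv : ℝ → ℝ := fun z => ∫ ξ in (0:ℝ)..z, gv ξ with hIv_def
  have hIu_deriv : ∀ z, HasDerivAt Iu (gu z) z :=
    fun z => (hguc.integral_hasStrictDerivAt 0 z).hasDerivAt
  have hIv_deriv : ∀ z, HasDerivAt Iv (gv z) z :=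
    fun z => (hgvc.integral_hasStrictDerivAt 0 z).hasDerivAt
  have hIu_mono : ∀ a b : ℝ, a ≤ b → Iu a ≤ Iu b := by
    intro a b hab
    have hsplit := intervalIntegral.integral_add_adjacent_intervals
      (hguc.intervalIntegrable (μ := volume) 0 a) (hguc.intervalIntegrable (μ := volume) a b)
    have hpos : 0 ≤ ∫ ξ in a..b, gu ξ :=
      intervalIntegral.integral_nonneg hab (fun ξ _ => (hgupos ξ).le)
    simp only [hIu_def]
    linarith [hsplit]
  have hIv_mono : ∀ a b : ℝ, a ≤ b → Iv a ≤ Iv b := by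
    intro a b hab
    have hsplit := intervalIntegral.integral_add_adjacent_intervals
      (hgvc.intervalIntegrable (μ := volume) 0 a) (hgvc.intervalIntegrable (μ := volume) a b)
    have hpos : 0 ≤ ∫ ξ in a..b, gv ξ :=
      intervalIntegral.integral_nonneg hab (fun ξ _ => (hgvpos ξ).le)
    simp only [hIv_def]
    linarith [hsplit]
  have hIu0 : Iu 0 = 0 := intervalIntegral.integral_same
  have hIv0 : Iv 0 = 0 := intervalIntegral.integral_same
  have hIu_nonneg : ∀ z, 0 ≤ z → 0 ≤ Iu z := fun z hz => hIu0 ▸ hIu_mono 0 z hz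
  have hIv_nonneg : ∀ z, 0 ≤ z → 0 ≤ Iv z := fun z hz => hIv0 ▸ hIv_mono 0 z hz
  -- rewrite the assumption integral
  have ht' : T + Iu x ≤ t := by
    have : (∫ ξ in (0:ℝ)..x, (lu ξ)⁻¹) = Iu x := by
      apply intervalIntegral.integral_congr
      intro ξ hξ
      rw [uIcc_of_le hx.1] at hξ
      simp only [hgu_def]
      rw [hπid ξ ⟨hξ.1, hξ.2.trans hx.2⟩]
    rwa [this] at ht
  have hB0 : 0 ≤ B := le_trans (le_trans (abs_nonneg _) (le_max_left _ _)) (hB T le_rfl)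
  have hM0 : 0 ≤ M := le_trans (le_trans (abs_nonneg _) (le_max_left _ _))
    (hM 0 ⟨le_rfl, zero_le_one⟩ 0 Set.self_mem_Ici)
  -- the Picard iterates bound
  set Q : ℕ → ℝ → ℝ := fun n z =>
    B * ∑ k ∈ Finset.range n, (c*z)^k / (k.factorial : ℝ)
      + M * ((c*z)^n / (n.factorial : ℝ)) with hQ_def
  have hQc : ∀ n, Continuous (fun z => c * Q n z) := by
    intro n
    simp only [hQ_def]
    refine continuous_const.mul (Continuous.add ?_ ?_)
    · exact continuous_const.mul (continuous_finset_sum _ (fun k _ =>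
        ((continuous_const.mul continuous_id).pow k).div_const _))
    · exact continuous_const.mul
        (((continuous_const.mul continuous_id).pow n).div_const _)
  have hpde_dx : ∀ p ∈ Icc (0:ℝ) 1 ×ˢ Ici (0:ℝ),
      HasDerivAt (fun y => u y p.2) (ux p.1 p.2) p.1 :=
    fun p hp => (hpde p.1 hp.1 p.2 hp.2).1
  have hpde_dt : ∀ p ∈ Icc (0:ℝ) 1 ×ˢ Ici (0:ℝ),
      HasDerivAt (fun s => u p.1 s) (ut p.1 p.2) p.2 :=
    fun p hp => (hpde p.1 hp.1 p.2 hp.2).2.1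
  have hpde_dxv : ∀ p ∈ Icc (0:ℝ) 1 ×ˢ Ici (0:ℝ),
      HasDerivAt (fun y => v y p.2) (vx p.1 p.2) p.1 :=
    fun p hp => (hpde p.1 hp.1 p.2 hp.2).2.2.1
  have hpde_dtv : ∀ p ∈ Icc (0:ℝ) 1 ×ˢ Ici (0:ℝ),
      HasDerivAt (fun s => v p.1 s) (vt p.1 p.2) p.2 :=
    fun p hp => (hpde p.1 hp.1 p.2 hp.2).2.2.2.1
  have main : ∀ n : ℕ, ∀ y ∈ Icc (0:ℝ) 1, ∀ s : ℝ, T + Iu y ≤ s →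
      max |u y s| |v y s| ≤ Q n y := by
    intro n
    induction n with
    | zero =>
      intro y hy s hs
      have hs0 : (0:ℝ) ≤ s := le_trans (by linarith [hIu_nonneg y hy.1]) hs
      simpa [hQ_def] using hM y hy s hs0
    | succ n ih =>
      intro y hy s hs
      have hy1 : ∀ z ∈ Icc (0:ℝ) y, z ∈ Icc (0:ℝ) 1 :=
        fun z hz => ⟨hz.1, hz.2.trans hy.2⟩
      -- the u bound, along the rightward characteristic
      have hu_bound : |u y s| ≤ Q (n+1) y := by
        set t0 : ℝ := s - Iu y with ht0_def
        have ht0T : T ≤ t0 := by simp only [ht0_def]; linarith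
        set σ : ℝ → ℝ := fun z => t0 + Iu z with hσ_def
        have hσd : ∀ z, HasDerivAt σ (gu z) z := fun z => (hIu_deriv z).const_add t0
        have hσ0 : ∀ z ∈ Icc (0:ℝ) y, 0 ≤ σ z := by
          intro z hz
          have := hIu_nonneg z hz.1
          simp only [hσ_def]
          linarith
        have hregion : ∀ z ∈ Icc (0:ℝ) y, T + Iu z ≤ σ z := by
          intro z hz
          simp only [hσ_def]
          linarith
        have hbound : ∀ z ∈ Icc (0:ℝ) y,
            |ux z (σ z) + ut z (σ z) * gu z| ≤ c * Q n z := by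
          intro z hz
          have hz1 := hy1 z hz
          have hzS : (0:ℝ) ≤ σ z := hσ0 z hz
          have hpz := hpde z hz1 (σ z) hzS
          have hguz : gu z = (lu z)⁻¹ := by simp only [hgu_def]; rw [hπid z hz1]
          have hluz : 0 < lu z := by
            have := hlupos z; rwa [hπid z hz1] at this
          have hexpr : ux z (σ z) + ut z (σ z) * gu z
              = fu z (u z (σ z)) (v z (σ z)) * (lu z)⁻¹ := by
            rw [hguz, hpz.2.2.2.2.1]
            field_simp
            ring
          rw [hexpr]
          have hfu_abs : |fu z (u z (σ z)) (v z (σ z))|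
              ≤ c0 * max |u z (σ z)| |v z (σ z)| := by
            have h1 := hfuL z hz1 (u z (σ z)) (v z (σ z)) 0 0
            rw [(hzero z hz1).1] at h1
            simp only [sub_zero] at h1
            refine le_trans h1 ?_
            apply mul_le_mul_of_nonneg_right hlFc0
            exact le_trans (abs_nonneg _) (le_max_left _ _)
          have hmaxQ : max |u z (σ z)| |v z (σ z)| ≤ Q n z :=
            ih z hz1 (σ z) (hregion z hz)
          have hmax0 : (0:ℝ) ≤ max |u z (σ z)| |v z (σ z)| :=
            le_trans (abs_nonneg _) (le_max_left _ _)
          have hQnn : (0:ℝ) ≤ Q n z := le_trans hmax0 hmaxQ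
          calc |fu z (u z (σ z)) (v z (σ z)) * (lu z)⁻¹|
              = |fu z (u z (σ z)) (v z (σ z))| * (lu z)⁻¹ := by
                rw [abs_mul, abs_of_pos (inv_pos.2 hluz)]
            _ ≤ (c0 * Q n z) * l := by
                apply mul_le_mul
                · exact le_trans hfu_abs (mul_le_mul_of_nonneg_left hmaxQ hc0nn)
                · have := hgule z; rwa [hguz] at this
                · exact (inv_pos.2 hluz).le
                · positivity
            _ = c * Q n z := by rw [hc_def]; ring
        have hcb := my_curve_bound u ux ut hpde_dx hpde_dt hcux hcut y hy σ gu hσd hguc hσ0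
          (fun z => c * Q n z) (hQc n) hbound
        have hσy : σ y = s := by simp only [hσ_def, ht0_def]; ring
        have hσz : σ 0 = t0 := by simp only [hσ_def]; rw [hIu0]; ring
        rw [hσy, hσz] at hcb
        have hu0 : |u 0 t0| ≤ B := le_trans (le_max_left _ _) (hB t0 ht0T)
        calc |u y s| ≤ |u 0 t0| + ∫ z in (0:ℝ)..y, c * Q n z := hcb
          _ ≤ B + ∫ z in (0:ℝ)..y, c * Q n z := by linarith
          _ = Q (n+1) y := by
              rw [hQ_def]
              exact my_Qstep B M c y n
      -- the v bound, along the leftward characteristic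
      have hv_bound : |v y s| ≤ Q (n+1) y := by
        set s1 : ℝ := s + Iv y with hs1_def
        set ρ : ℝ → ℝ := fun z => s1 - Iv z with hρ_def
        have hρd : ∀ z, HasDerivAt ρ (-gv z) z := fun z => (hIv_deriv z).const_sub s1
        have hρge : ∀ z ∈ Icc (0:ℝ) y, s ≤ ρ z := by
          intro z hz
          have := hIv_mono z y hz.2
          simp only [hρ_def, hs1_def]
          linarith
        have hρ0 : ∀ z ∈ Icc (0:ℝ) y, 0 ≤ ρ z := by
          intro z hz
          have h1 := hρge z hz
          have h2 : (0:ℝ) ≤ s := le_trans (by linarith [hIu_nonneg y hy.1]) hs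
          linarith
        have hregion : ∀ z ∈ Icc (0:ℝ) y, T + Iu z ≤ ρ z := by
          intro z hz
          have h1 := hρge z hz
          have h2 := hIu_mono z y hz.2
          linarith
        have hbound : ∀ z ∈ Icc (0:ℝ) y,
            |vx z (ρ z) + vt z (ρ z) * (-gv z)| ≤ c * Q n z := by
          intro z hz
          have hz1 := hy1 z hz
          have hzS : (0:ℝ) ≤ ρ z := hρ0 z hz
          have hpz := hpde z hz1 (ρ z) hzS
          have hgvz : gv z = (lv z)⁻¹ := by simp only [hgv_def]; rw [hπid z hz1]
          have hlvz : 0 < lv z := by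
            have := hlvpos z; rwa [hπid z hz1] at this
          have hexpr : vx z (ρ z) + vt z (ρ z) * (-gv z)
              = -(fv z (u z (ρ z)) (v z (ρ z)) * (lv z)⁻¹) := by
            rw [hgvz, hpz.2.2.2.2.2]
            field_simp
            ring
          rw [hexpr, abs_neg]
          have hfv_abs : |fv z (u z (ρ z)) (v z (ρ z))|
              ≤ c0 * max |u z (ρ z)| |v z (ρ z)| := by
            have h1 := hfvL z hz1 (u z (ρ z)) (v z (ρ z)) 0 0
            rw [(hzero z hz1).2] at h1
            simp only [sub_zero] at h1
            refine le_trans h1 ?_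
            apply mul_le_mul_of_nonneg_right hlFc0
            exact le_trans (abs_nonneg _) (le_max_left _ _)
          have hmaxQ : max |u z (ρ z)| |v z (ρ z)| ≤ Q n z :=
            ih z hz1 (ρ z) (hregion z hz)
          have hmax0 : (0:ℝ) ≤ max |u z (ρ z)| |v z (ρ z)| :=
            le_trans (abs_nonneg _) (le_max_left _ _)
          have hQnn : (0:ℝ) ≤ Q n z := le_trans hmax0 hmaxQ
          calc |fv z (u z (ρ z)) (v z (ρ z)) * (lv z)⁻¹|
              = |fv z (u z (ρ z)) (v z (ρ z))| * (lv z)⁻¹ := by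
                rw [abs_mul, abs_of_pos (inv_pos.2 hlvz)]
            _ ≤ (c0 * Q n z) * l := by
                apply mul_le_mul
                · exact le_trans hfv_abs (mul_le_mul_of_nonneg_left hmaxQ hc0nn)
                · have := hgvle z; rwa [hgvz] at this
                · exact (inv_pos.2 hlvz).le
                · positivity
            _ = c * Q n z := by rw [hc_def]; ring
        have hcb := my_curve_bound v vx vt hpde_dxv hpde_dtv hcvx hcvt y hy ρ (fun z => -gv z)
          hρd hgvc.neg hρ0 (fun z => c * Q n z) (hQc n) hbound
        have hρy : ρ y = s := by simp only [hρ_def, hs1_def]; ring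
        have hρz : ρ 0 = s1 := by simp only [hρ_def]; rw [hIv0]; ring
        rw [hρy, hρz] at hcb
        have hs1T : T ≤ s1 := by
          have h2 : T ≤ s := le_trans (by linarith [hIu_nonneg y hy.1]) hs
          have := hIv_nonneg y hy.1
          simp only [hs1_def]
          linarith
        have hv0 : |v 0 s1| ≤ B := le_trans (le_max_right _ _) (hB s1 hs1T)
        calc |v y s| ≤ |v 0 s1| + ∫ z in (0:ℝ)..y, c * Q n z := hcb
          _ ≤ B + ∫ z in (0:ℝ)..y, c * Q n z := by linarith
          _ = Q (n+1) y := by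
              rw [hQ_def]
              exact my_Qstep B M c y n
      exact max_le hu_bound hv_bound
  -- pass to the limit n → ∞
  have hbnd : ∀ n : ℕ, max |u x t| |v x t| ≤ B * Real.exp c + M * (c^n / (n.factorial : ℝ)) := by
    intro n
    refine le_trans (main n x hx t ht') ?_
    have hcx0 : 0 ≤ c * x := mul_nonneg hcnn hx.1
    have h1 : ∑ k ∈ Finset.range n, (c*x)^k / (k.factorial : ℝ) ≤ Real.exp c := by
      refine le_trans (Real.sum_le_exp_of_nonneg hcx0 n) ?_
      exact Real.exp_le_exp.2 (mul_le_of_le_one_right hcnn hx.2)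
    have hcx_le : c * x ≤ c := mul_le_of_le_one_right hcnn hx.2
    have h2 : (c*x)^n / (n.factorial : ℝ) ≤ c^n / (n.factorial : ℝ) := by
      apply div_le_div_of_nonneg_right (pow_le_pow_left₀ hcx0 hcx_le n)
      positivity
    simp only [hQ_def]
    exact add_le_add (mul_le_mul_of_nonneg_left h1 hB0) (mul_le_mul_of_nonneg_left h2 hM0)
  have hlim : Tendsto (fun n : ℕ => B * Real.exp c + M * (c^n / (n.factorial : ℝ))) atTop
      (nhds (B * Real.exp c)) := by
    have h0 : Tendsto (fun n : ℕ => c^n / (n.factorial : ℝ)) atTop (nhds 0) :=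
      FloorSemiring.tendsto_pow_div_factorial_atTop c
    have := tendsto_const_nhds (x := B * Real.exp c) (f := atTop (α := ℕ)) |>.add
      (h0.const_mul M)
    simpa using this
  calc max |u x t| |v x t| ≤ B * Real.exp c := ge_of_tendsto' hlim hbnd
    _ = Real.exp c * B := mul_comm _ _
end
end

section
/- Assume f^u(x,0,0) = f^v(x,0,0) = 0 for all x, f⁰(0,0,t) = 0 and g⁰(0,0,t) = 0 for all t, and let K : ℝⁿ × ℝ → ℝ be globally Lipschitz in X with constant l_K, uniformly in t, with K(0,t) = 0 for all t. Suppose the origin of the closed-loop ODE Ẏ(t) = f⁰(Y(t), K(Y(t), t), t) is globally asymptotically stable (for every ε > 0 there is δ > 0 such that every solution with ‖Y(t₀)‖_∞ ≤ δ satisfies ‖Y(t)‖_∞ ≤ ε for all t ≥ t₀, and every solution satisfies Y(t) → 0 as t → ∞). Let (u, v, X) be a classical solution on [0,1] × [0,∞) of the semilinear system with the ODE coupling at x = 0, and suppose there is a finite T₀ ≥ 0 such that v(0,t) = K(X(t), t) for all t ≥ T₀. Then X(t) → 0 and sup_{x ∈ [0,1]} max(|u(x,t)|, |v(x,t)|)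 → 0 as t → ∞. -/
open Set MeasureTheory intervalIntegral Filter

noncomputable section

/-- Continuity and global Lipschitz assumptions (in `(X,v)`, uniformly in `t`)
on the functions `f0, g0` defining the ODE coupling at `x = 0`.
The norm on `Fin n → ℝ` is the maximum norm. -/
def CouplingData {n : ℕ} (f0 : (Fin n → ℝ) → ℝ → ℝ → (Fin n → ℝ))
    (g0 : (Fin n → ℝ) → ℝ → ℝ → ℝ) (lfX lfv lgX lgv : ℝ) : Prop :=
  Continuous (fun p : (Fin n → ℝ) × ℝ × ℝ => f0 p.1 p.2.1 p.2.2) ∧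
  Continuous (fun p : (Fin n → ℝ) × ℝ × ℝ => g0 p.1 p.2.1 p.2.2) ∧
  (∀ X Y : Fin n → ℝ, ∀ a b t : ℝ,
    ‖f0 X a t - f0 Y b t‖ ≤ lfX * ‖X - Y‖ + lfv * |a - b| ∧
    |g0 X a t - g0 Y b t| ≤ lgX * ‖X - Y‖ + lgv * |a - b|)


lemma uIcc_abs_le {y0 y z : ℝ} (hz : z ∈ uIcc y0 y) : |z - y0| ≤ |y - y0| := by
  rw [Set.mem_uIcc] at hz
  rcases hz with ⟨h, h'⟩ | ⟨h, h'⟩ <;> rw [abs_sub_le_iff] <;> constructor <;>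
    [skip; skip; skip; skip] <;>
    nlinarith [le_abs_self (y - y0), neg_abs_le (y - y0)]

/-- Chain rule along a C¹ curve, at a point interior to the domain, for a function
with continuous partial derivatives on `Icc 0 1 ×ˢ Ici 0`. -/
lemma aux_chain (w wx wt : ℝ → ℝ → ℝ)
    (hd : ∀ p ∈ Icc (0:ℝ) 1, ∀ q ∈ Ici (0:ℝ),
      HasDerivAt (fun y => w y q) (wx p q) p ∧ HasDerivAt (fun s => w p s) (wt p q) q)
    (hwx : ContinuousOn (fun p : ℝ × ℝ => wx p.1 p.2) (Icc (0:ℝ) 1 ×ˢ Ici (0:ℝ)))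
    (θ : ℝ → ℝ) (θd y0 : ℝ) (hy0 : y0 ∈ Ioo (0:ℝ) 1) (hτ : 0 < θ y0)
    (hθ : HasDerivAt θ θd y0) :
    HasDerivAt (fun y => w y (θ y)) (wx y0 (θ y0) + θd * wt y0 (θ y0)) y0 := by
  have hy0' : y0 ∈ Icc (0:ℝ) 1 := Ioo_subset_Icc_self hy0
  have hτ' : θ y0 ∈ Ici (0:ℝ) := le_of_lt hτ
  have h1 : HasDerivAt (fun y => w y0 (θ y)) (wt y0 (θ y0) * θd) y0 :=
    ((hd y0 hy0' (θ y0) hτ').2).comp y0 hθ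
  have h2 : HasDerivAt (fun y => w y (θ y) - w y0 (θ y)) (wx y0 (θ y0)) y0 := by
    rw [hasDerivAt_iff_isLittleO, Asymptotics.isLittleO_iff]
    intro c hc
    have hmem : Icc (0:ℝ) 1 ×ˢ Ici (0:ℝ) ∈ nhds (y0, θ y0) :=
      prod_mem_nhds (Icc_mem_nhds hy0.1 hy0.2) (Ici_mem_nhds hτ)
    have hcwx : ContinuousAt (fun p : ℝ × ℝ => wx p.1 p.2) (y0, θ y0) :=
      hwx.continuousAt hmem
    rw [Metric.continuousAt_iff] at hcwx
    obtain ⟨δ0, hδ0, hball⟩ := hcwx c hc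
    set δ1 : ℝ := min δ0 (min y0 (min (1 - y0) (θ y0))) with hδ1def
    have hδ1 : 0 < δ1 := by
      have := hy0.1; have := hy0.2
      simp only [hδ1def, lt_min_iff]
      refine ⟨hδ0, by linarith, by linarith, hτ⟩
    have hθc : ContinuousAt θ y0 := hθ.continuousAt
    rw [Metric.continuousAt_iff] at hθc
    obtain ⟨δ2, hδ2, hθball⟩ := hθc δ1 hδ1
    set δ : ℝ := min δ1 δ2 with hδdef
    have hδ : 0 < δ := lt_min hδ1 hδ2
    filter_upwards [Metric.ball_mem_nhds y0 hδ] with y hy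
    rw [Metric.mem_ball, Real.dist_eq] at hy
    have hyδ1 : |y - y0| < δ1 := lt_of_lt_of_le hy (min_le_left _ _)
    have hθy : |θ y - θ y0| < δ1 := by
      have := hθball (show dist y y0 < δ2 by
        rw [Real.dist_eq]; exact lt_of_lt_of_le hy (min_le_right _ _))
      rwa [Real.dist_eq] at this
    -- membership facts
    have hzIcc : ∀ z ∈ uIcc y0 y, z ∈ Icc (0:ℝ) 1 := by
      intro z hz
      have h1' := uIcc_abs_le hz
      have h2' : |z - y0| < δ1 := lt_of_le_of_lt h1' hyδ1
      rw [abs_lt] at h2'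
      have hb1 : δ1 ≤ y0 := le_trans (min_le_right _ _) (min_le_left _ _)
      have hb2 : δ1 ≤ 1 - y0 :=
        le_trans (min_le_right _ _) (le_trans (min_le_right _ _) (min_le_left _ _))
      constructor <;> nlinarith
    have hθy0 : θ y ∈ Ici (0:ℝ) := by
      have hb3 : δ1 ≤ θ y0 := le_trans (min_le_right _ _)
        (le_trans (min_le_right _ _) (min_le_right _ _))
      rw [abs_lt] at hθy
      simp only [mem_Ici]
      linarith [hθy.1]
    have hder : ∀ z ∈ uIcc y0 y, HasDerivAt (fun z => w z (θ y)) (wx z (θ y)) z :=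
      fun z hz => (hd z (hzIcc z hz) (θ y) hθy0).1
    have hcont : ContinuousOn (fun z => wx z (θ y)) (uIcc y0 y) := by
      have : ContinuousOn (fun z : ℝ => wx z (θ y)) (Icc (0:ℝ) 1) := by
        have := hwx.comp (f := fun z : ℝ => (z, θ y))
          (continuous_id.prodMk continuous_const).continuousOn
          (fun z hz => by exact ⟨hz, hθy0⟩)
        exact this
      exact this.mono (fun z hz => hzIcc z hz)
    have hint : IntervalIntegrable (fun z => wx z (θ y)) volume y0 y :=
      hcont.intervalIntegrable
    have heq : w y (θ y) - w y0 (θ y) = ∫ z in y0..y, wx z (θ y) :=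
      (integral_eq_sub_of_hasDerivAt hder hint).symm
    have heq2 : w y (θ y) - w y0 (θ y) - (y - y0) * wx y0 (θ y0)
        = ∫ z in y0..y, (wx z (θ y) - wx y0 (θ y0)) := by
      rw [intervalIntegral.integral_sub hint (intervalIntegrable_const),
        intervalIntegral.integral_const, ← heq, smul_eq_mul]
    have hbound : ∀ z ∈ uIoc y0 y, ‖wx z (θ y) - wx y0 (θ y0)‖ ≤ c := by
      intro z hz
      have hz' : z ∈ uIcc y0 y := Ioc_subset_Icc_self hz
      have hd1 : dist (z, θ y) (y0, θ y0) < δ0 := by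
        rw [Prod.dist_eq]
        apply max_lt
        · rw [Real.dist_eq]
          exact lt_of_le_of_lt (uIcc_abs_le hz')
            (lt_of_lt_of_le hyδ1 (min_le_left _ _))
        · rw [Real.dist_eq]
          exact lt_of_lt_of_le hθy (min_le_left _ _)
      have := hball hd1
      rw [Real.dist_eq] at this
      exact le_of_lt this
    have := intervalIntegral.norm_integral_le_of_norm_le_const hbound
    simp only [sub_sub_cancel_left, sub_zero, smul_eq_mul]
    calc ‖w y (θ y) - w y0 (θ y) - (w y0 (θ y0) - w y0 (θ y0)) - (y - y0) * wx y0 (θ y0)‖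
        = ‖∫ z in y0..y, (wx z (θ y) - wx y0 (θ y0))‖ := by rw [sub_self, sub_zero, heq2]
      _ ≤ c * |y - y0| := this
      _ = c * ‖y - y0‖ := by rw [Real.norm_eq_abs]
  have := h2.add h1
  have heqf : (fun y => w y (θ y) - w y0 (θ y) + w y0 (θ y)) = fun y => w y (θ y) := by
    funext y; ring
  simp only [Pi.add_def] at this; rw [heqf] at this
  rw [mul_comm θd]; exact this

/-- Joint continuity on a compact box from continuous partial derivatives. -/
lemma aux_cont (w wx wt : ℝ → ℝ → ℝ)
    (hd : ∀ p ∈ Icc (0:ℝ) 1, ∀ q ∈ Ici (0:ℝ),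
      HasDerivAt (fun y => w y q) (wx p q) p ∧ HasDerivAt (fun s => w p s) (wt p q) q)
    (hwx : ContinuousOn (fun p : ℝ × ℝ => wx p.1 p.2) (Icc (0:ℝ) 1 ×ˢ Ici (0:ℝ)))
    (hwt : ContinuousOn (fun p : ℝ × ℝ => wt p.1 p.2) (Icc (0:ℝ) 1 ×ˢ Ici (0:ℝ)))
    (a b : ℝ) (ha : 0 ≤ a) :
    ContinuousOn (fun p : ℝ × ℝ => w p.1 p.2) (Icc (0:ℝ) 1 ×ˢ Icc a b) := by
  rcases lt_or_ge b a with hba | hab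
  · rw [Icc_eq_empty (not_le.mpr hba), Set.prod_empty]
    exact continuousOn_empty _
  have hsub : (Icc (0:ℝ) 1 ×ˢ Icc a b) ⊆ (Icc (0:ℝ) 1 ×ˢ Ici (0:ℝ)) :=
    Set.prod_mono subset_rfl (le_trans (Icc_subset_Ici_self) (Ici_subset_Ici.mpr ha) : Icc a b ⊆ Ici 0)
  have hcpt : IsCompact (Icc (0:ℝ) 1 ×ˢ Icc a b) := isCompact_Icc.prod isCompact_Icc
  obtain ⟨C1, hC1⟩ := hcpt.exists_bound_of_continuousOn (hwx.mono hsub)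
  obtain ⟨C2, hC2⟩ := hcpt.exists_bound_of_continuousOn (hwt.mono hsub)
  set C : ℝ := max C1 C2 with hCdef
  have hC0 : 0 ≤ C := by
    have := hC1 (0, a) (by constructor <;> simp [ha, hab])
    exact le_trans (le_trans (norm_nonneg _) this) (le_max_left _ _)
  have key : ∀ p ∈ Icc (0:ℝ) 1 ×ˢ Icc a b, ∀ q ∈ Icc (0:ℝ) 1 ×ˢ Icc a b,
      |w p.1 p.2 - w q.1 q.2| ≤ C * (|p.1 - q.1| + |p.2 - q.2|) := by
    rintro ⟨p1, p2⟩ ⟨hp1, hp2⟩ ⟨q1, q2⟩ ⟨hq1, hq2⟩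
    simp only at *
    have huIcc1 : uIcc q1 p1 ⊆ Icc (0:ℝ) 1 := by
      apply uIcc_subset_Icc hq1 hp1
    have huIcc2 : uIcc q2 p2 ⊆ Icc a b := by
      apply uIcc_subset_Icc hq2 hp2
    have hp2' : p2 ∈ Ici (0:ℝ) := le_trans ha hp2.1
    have term1 : |w p1 p2 - w q1 p2| ≤ C * |p1 - q1| := by
      have hder : ∀ z ∈ uIcc q1 p1, HasDerivAt (fun z => w z p2) (wx z p2) z :=
        fun z hz => (hd z (huIcc1 hz) p2 hp2').1
      have hcont : ContinuousOn (fun z => wx z p2) (uIcc q1 p1) :=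
        (hwx.comp (continuous_id.prodMk continuous_const).continuousOn
          (fun z hz => ⟨huIcc1 hz, hp2'⟩)).mono subset_rfl
      have heq : w p1 p2 - w q1 p2 = ∫ z in q1..p1, wx z p2 :=
        (integral_eq_sub_of_hasDerivAt hder hcont.intervalIntegrable).symm
      rw [heq, ← Real.norm_eq_abs]
      refine intervalIntegral.norm_integral_le_of_norm_le_const (C := C) (fun z hz => ?_)
      have : (z, p2) ∈ Icc (0:ℝ) 1 ×ˢ Icc a b := ⟨huIcc1 (Ioc_subset_Icc_self hz), hp2⟩
      exact le_trans (hC1 _ this) (le_max_left _ _)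
    have term2 : |w q1 p2 - w q1 q2| ≤ C * |p2 - q2| := by
      have hq1' : q1 ∈ Icc (0:ℝ) 1 := hq1
      have hder : ∀ s ∈ uIcc q2 p2, HasDerivAt (fun s => w q1 s) (wt q1 s) s :=
        fun s hs => (hd q1 hq1' s (le_trans ha (huIcc2 hs).1)).2
      have hcont : ContinuousOn (fun s => wt q1 s) (uIcc q2 p2) :=
        (hwt.comp (continuous_const.prodMk continuous_id).continuousOn
          (fun s hs => ⟨hq1', le_trans ha (huIcc2 hs).1⟩)).mono subset_rfl
      have heq : w q1 p2 - w q1 q2 = ∫ s in q2..p2, wt q1 s :=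
        (integral_eq_sub_of_hasDerivAt hder hcont.intervalIntegrable).symm
      rw [heq, ← Real.norm_eq_abs]
      refine intervalIntegral.norm_integral_le_of_norm_le_const (C := C) (fun s hs => ?_)
      have : (q1, s) ∈ Icc (0:ℝ) 1 ×ˢ Icc a b := ⟨hq1', huIcc2 (Ioc_subset_Icc_self hs)⟩
      exact le_trans (hC2 _ this) (le_max_right _ _)
    calc |w p1 p2 - w q1 q2| ≤ |w p1 p2 - w q1 p2| + |w q1 p2 - w q1 q2| := abs_sub_le _ _ _
      _ ≤ C * |p1 - q1| + C * |p2 - q2| := add_le_add term1 term2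
      _ = C * (|p1 - q1| + |p2 - q2|) := by ring
  rw [Metric.continuousOn_iff]
  intro p hp ε hε
  refine ⟨ε / (2 * C + 1), by positivity, fun q hq hdist => ?_⟩
  rw [Real.dist_eq]
  have h1 : |q.1 - p.1| ≤ dist q p := by
    rw [Prod.dist_eq]; exact le_trans (le_of_eq (Real.dist_eq _ _).symm) (le_max_left _ _)
  have h2 : |q.2 - p.2| ≤ dist q p := by
    rw [Prod.dist_eq]; exact le_trans (le_of_eq (Real.dist_eq _ _).symm) (le_max_right _ _)
  calc |w q.1 q.2 - w p.1 p.2| ≤ C * (|q.1 - p.1| + |q.2 - p.2|) := key q hq p hp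
    _ ≤ C * (2 * dist q p) := by nlinarith [dist_nonneg (x := q) (y := p)]
    _ < ε := by
        have hd0 : (0:ℝ) ≤ dist q p := dist_nonneg
        have h3 : dist q p * (2 * C + 1) < ε := (lt_div_iff₀ (by positivity)).mp hdist
        nlinarith


lemma cone_lemma (lu lv : ℝ → ℝ) (fu fv : ℝ → ℝ → ℝ → ℝ) (l lF : ℝ)
    (hdata : SemilinearData lu lv fu fv l lF)
    (hF0 : ∀ x ∈ Icc (0:ℝ) 1, fu x 0 0 = 0 ∧ fv x 0 0 = 0)
    (u v ux ut vx vt : ℝ → ℝ → ℝ)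
    (hsol : IsSemilinearSolution lu lv fu fv (Ici 0) u v ux ut vx vt)
    (η T1 t : ℝ) (hη : 0 ≤ η) (hT1 : 1 ≤ T1)
    (hbd : ∀ s : ℝ, T1 ≤ s → |u 0 s| ≤ η ∧ |v 0 s| ≤ η)
    (ht : T1 + 2 * l ≤ t) :
    ∀ x ∈ Icc (0:ℝ) 1, max |u x t| |v x t| ≤ η * Real.exp (l * lF) := by
  obtain ⟨hl, hluc, hlvc, hlub, hlvb, hfuc, hfvc, hfulip, hfvlip⟩ := hdata
  obtain ⟨hD, huxc, hutc, hvxc, hvtc⟩ := hsol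
  have h01 : (0:ℝ) ∈ Icc (0:ℝ) 1 := by norm_num
  have hlF : 0 ≤ lF := by
    have h := hfulip 0 h01 1 0 0 0
    have h2 : max |(1:ℝ) - 0| |(0:ℝ) - 0| = 1 := by norm_num
    rw [h2, mul_one] at h
    linarith [abs_nonneg (fu 0 1 0 - fu 0 0 0)]
  have hc : 0 ≤ l * lF := by positivity
  -- clamped speeds
  set cl : ℝ → ℝ := fun y => min 1 (max 0 y) with hcldef
  have hcl_mem : ∀ y, cl y ∈ Icc (0:ℝ) 1 :=
    fun y => ⟨le_min (by norm_num) (le_max_left _ _), min_le_left _ _⟩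
  have hcl_id : ∀ y ∈ Icc (0:ℝ) 1, cl y = y :=
    fun y hy => by simp only [hcldef]; rw [max_eq_right hy.1, min_eq_right hy.2]
  have hcl_cont : Continuous cl := continuous_const.min (continuous_const.max continuous_id)
  set Lu : ℝ → ℝ := fun y => lu (cl y) with hLudef
  set Lv : ℝ → ℝ := fun y => lv (cl y) with hLvdef
  have hLuc : Continuous Lu := hluc.comp_continuous hcl_cont hcl_mem
  have hLvc : Continuous Lv := hlvc.comp_continuous hcl_cont hcl_mem
  have hLupos : ∀ y, 0 < Lu y := fun y =>
    lt_of_lt_of_le (by positivity) (hlub _ (hcl_mem y))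
  have hLvpos : ∀ y, 0 < Lv y := fun y =>
    lt_of_lt_of_le (by positivity) (hlvb _ (hcl_mem y))
  set gu : ℝ → ℝ := fun y => 1 / Lu y with hgudef
  set gv : ℝ → ℝ := fun y => 1 / Lv y with hgvdef
  have hguc : Continuous gu := continuous_const.div hLuc (fun y => ne_of_gt (hLupos y))
  have hgvc : Continuous gv := continuous_const.div hLvc (fun y => ne_of_gt (hLvpos y))
  have hgu_pos : ∀ y, 0 < gu y := fun y => by
    simp only [hgudef]; exact one_div_pos.mpr (hLupos y)
  have hgv_pos : ∀ y, 0 < gv y := fun y => by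
    simp only [hgvdef]; exact one_div_pos.mpr (hLvpos y)
  have hgu_le : ∀ y, gu y ≤ l := fun y => by
    have h1 : 1 / l ≤ Lu y := hlub _ (hcl_mem y)
    calc gu y = 1 / Lu y := rfl
      _ ≤ 1 / (1 / l) := one_div_le_one_div_of_le (by positivity) h1
      _ = l := one_div_one_div l
  have hgv_le : ∀ y, gv y ≤ l := fun y => by
    have h1 : 1 / l ≤ Lv y := hlvb _ (hcl_mem y)
    calc gv y = 1 / Lv y := rfl
      _ ≤ 1 / (1 / l) := one_div_le_one_div_of_le (by positivity) h1
      _ = l := one_div_one_div l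
  set Au : ℝ → ℝ := fun y => ∫ z in (0:ℝ)..y, gu z with hAudef
  set Av : ℝ → ℝ := fun y => ∫ z in (0:ℝ)..y, gv z with hAvdef
  have hAuder : ∀ y, HasDerivAt Au (gu y) y := fun y =>
    intervalIntegral.integral_hasDerivAt_right (hguc.intervalIntegrable _ _)
      hguc.stronglyMeasurable.stronglyMeasurableAtFilter hguc.continuousAt
  have hAvder : ∀ y, HasDerivAt Av (gv y) y := fun y =>
    intervalIntegral.integral_hasDerivAt_right (hgvc.intervalIntegrable _ _)
      hgvc.stronglyMeasurable.stronglyMeasurableAtFilter hgvc.continuousAt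
  have hAusub : ∀ x y : ℝ, Au x - Au y = ∫ z in y..x, gu z := fun x y =>
    intervalIntegral.integral_interval_sub_left (hguc.intervalIntegrable _ _)
      (hguc.intervalIntegrable _ _)
  have hAvsub : ∀ x y : ℝ, Av x - Av y = ∫ z in y..x, gv z := fun x y =>
    intervalIntegral.integral_interval_sub_left (hgvc.intervalIntegrable _ _)
      (hgvc.intervalIntegrable _ _)
  have hAulip : ∀ x y : ℝ, |Au x - Au y| ≤ l * |x - y| := by
    intro x y
    rw [hAusub x y, ← Real.norm_eq_abs]
    exact intervalIntegral.norm_integral_le_of_norm_le_const (fun z _ => by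
      rw [Real.norm_eq_abs, abs_of_pos (hgu_pos z)]; exact hgu_le z)
  have hAvlip : ∀ x y : ℝ, |Av x - Av y| ≤ l * |x - y| := by
    intro x y
    rw [hAvsub x y, ← Real.norm_eq_abs]
    exact intervalIntegral.norm_integral_le_of_norm_le_const (fun z _ => by
      rw [Real.norm_eq_abs, abs_of_pos (hgv_pos z)]; exact hgv_le z)
  have hAuC : Continuous Au := by
    rw [continuous_iff_continuousAt]; exact fun y => (hAuder y).continuousAt
  have hAvC : Continuous Av := by
    rw [continuous_iff_continuousAt]; exact fun y => (hAvder y).continuousAt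
  -- derivative pairs
  have hdu : ∀ p ∈ Icc (0:ℝ) 1, ∀ q ∈ Ici (0:ℝ),
      HasDerivAt (fun y => u y q) (ux p q) p ∧ HasDerivAt (fun s => u p s) (ut p q) q :=
    fun p hp q hq => ⟨(hD p hp q hq).1, (hD p hp q hq).2.1⟩
  have hdv : ∀ p ∈ Icc (0:ℝ) 1, ∀ q ∈ Ici (0:ℝ),
      HasDerivAt (fun y => v y q) (vx p q) p ∧ HasDerivAt (fun s => v p s) (vt p q) q :=
    fun p hp q hq => ⟨(hD p hp q hq).2.2.1, (hD p hp q hq).2.2.2.1⟩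
  have htl : (0:ℝ) ≤ t - 2 * l := by nlinarith
  have hucont : ContinuousOn (fun p : ℝ × ℝ => u p.1 p.2)
      (Icc (0:ℝ) 1 ×ˢ Icc (t - 2*l) (t + 2*l)) := aux_cont u ux ut hdu huxc hutc _ _ htl
  have hvcont : ContinuousOn (fun p : ℝ × ℝ => v p.1 p.2)
      (Icc (0:ℝ) 1 ×ˢ Icc (t - 2*l) (t + 2*l)) := aux_cont v vx vt hdv hvxc hvtc _ _ htl
  have hWcont : ContinuousOn (fun p : ℝ × ℝ => max |u p.1 p.2| |v p.1 p.2|)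
      (Icc (0:ℝ) 1 ×ˢ Icc (t - 2*l) (t + 2*l)) :=
    continuous_max.comp_continuousOn ((hucont.abs).prodMk (hvcont.abs))
  obtain ⟨C, hC⟩ := (isCompact_Icc.prod isCompact_Icc).exists_bound_of_continuousOn hWcont
  have hC' : ∀ x ∈ Icc (0:ℝ) 1, ∀ s : ℝ, |s - t| ≤ 2 * l → max |u x s| |v x s| ≤ C := by
    intro x hx s hs
    rw [abs_le] at hs
    have hmem : ((x, s) : ℝ × ℝ) ∈ Icc (0:ℝ) 1 ×ˢ Icc (t - 2*l) (t + 2*l) :=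
      ⟨hx, by constructor <;> linarith [hs.1, hs.2]⟩
    exact le_trans (le_abs_self _) (hC _ hmem)
  have hC0 : 0 ≤ C := by
    have := hC' 0 h01 t (by simp; positivity)
    exact le_trans (le_trans (abs_nonneg (u 0 t)) (le_max_left _ _)) this
  -- core integral inequality
  have hcore : ∀ B : ℝ → ℝ, ContinuousOn B (Icc (0:ℝ) 1) →
      (∀ y ∈ Icc (0:ℝ) 1, ∀ τ : ℝ, |τ - t| ≤ l * (2 - y) → max |u y τ| |v y τ| ≤ B y) →
      ∀ x ∈ Icc (0:ℝ) 1, ∀ s : ℝ, |s - t| ≤ l * (2 - x) →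
        max |u x s| |v x s| ≤ η + ∫ y in (0:ℝ)..x, l * lF * B y := by
    intro B hBc hB x hx s hs
    have hIcc01 : Icc (0:ℝ) x ⊆ Icc (0:ℝ) 1 := Icc_subset_Icc le_rfl hx.2
    have hBnn : ∀ y ∈ Icc (0:ℝ) 1, 0 ≤ B y := fun y hy =>
      le_trans (le_trans (abs_nonneg _) (le_max_left _ _))
        (hB y hy t (by rw [sub_self, abs_zero]; nlinarith [hy.2]))
    have hintB : IntervalIntegrable (fun y => l * lF * B y) volume 0 x := by
      have hco : ContinuousOn (fun y => l * lF * B y) (uIcc (0:ℝ) x) := by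
        rw [uIcc_of_le hx.1]
        exact continuousOn_const.mul (hBc.mono hIcc01)
      exact hco.intervalIntegrable
    -- generic estimate given a curve with the right properties
    have hest : ∀ (w : ℝ → ℝ → ℝ) (F : ℝ → ℝ) (θ : ℝ → ℝ),
        ContinuousOn (fun y => w y (θ y)) (Icc 0 x) →
        (∀ y ∈ Ioo (0:ℝ) x, HasDerivAt (fun y => w y (θ y)) (F y) y) →
        IntervalIntegrable F volume 0 x →
        (∀ y ∈ Icc (0:ℝ) x, |F y| ≤ l * lF * B y) →
        |w 0 (θ 0)| ≤ η → θ x = s →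
        |w x s| ≤ η + ∫ y in (0:ℝ)..x, l * lF * B y := by
      intro w F θ hwc hwd hFint hFb h0 hθx
      have hFTC : ∫ y in (0:ℝ)..x, F y = w x (θ x) - w 0 (θ 0) :=
        integral_eq_sub_of_hasDerivAt_of_le hx.1 hwc hwd hFint
      have hwxs : w x s = w 0 (θ 0) + ∫ y in (0:ℝ)..x, F y := by
        rw [hFTC, hθx]; ring
      rw [hwxs]
      have habs : |∫ y in (0:ℝ)..x, F y| ≤ ∫ y in (0:ℝ)..x, |F y| :=
        intervalIntegral.abs_integral_le_integral_abs hx.1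
      have hmono : ∫ y in (0:ℝ)..x, |F y| ≤ ∫ y in (0:ℝ)..x, l * lF * B y :=
        intervalIntegral.integral_mono_on hx.1 hFint.abs hintB hFb
      calc |w 0 (θ 0) + ∫ y in (0:ℝ)..x, F y|
          ≤ |w 0 (θ 0)| + |∫ y in (0:ℝ)..x, F y| := abs_add_le _ _
        _ ≤ η + ∫ y in (0:ℝ)..x, l * lF * B y := add_le_add h0 (le_trans habs hmono)
    rw [max_le_iff]
    constructor
    · -- u component
      set θ : ℝ → ℝ := fun y => s - Au x + Au y with hθdef
      have hθJ : ∀ y ∈ Icc (0:ℝ) x, |θ y - t| ≤ l * (2 - y) := by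
        intro y hy
        have h1 : |θ y - s| ≤ l * (x - y) := by
          have he : θ y - s = -(Au x - Au y) := by simp only [hθdef]; ring
          rw [he, abs_neg]
          calc |Au x - Au y| ≤ l * |x - y| := hAulip x y
            _ = l * (x - y) := by
                rw [abs_of_nonneg (by linarith [hy.2] : (0:ℝ) ≤ x - y)]
        calc |θ y - t| ≤ |θ y - s| + |s - t| := abs_sub_le _ _ _
          _ ≤ l * (x - y) + l * (2 - x) := add_le_add h1 hs
          _ = l * (2 - y) := by ring
      have hθT1 : ∀ y ∈ Icc (0:ℝ) x, T1 ≤ θ y := by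
        intro y hy
        have h2 := hθJ y hy
        rw [abs_le] at h2
        have h3 : l * (2 - y) ≤ 2 * l := by nlinarith [hy.1]
        linarith [h2.1]
      have hθpos : ∀ y ∈ Icc (0:ℝ) x, 0 < θ y := fun y hy =>
        lt_of_lt_of_le (by linarith : (0:ℝ) < T1) (hθT1 y hy)
      have hθcont : Continuous θ := (continuous_const.add hAuC)
      have hθder : ∀ y, HasDerivAt θ (gu y) y := fun y => (hAuder y).const_add _
      have hmaps : ∀ y ∈ Icc (0:ℝ) x,
          ((y, θ y) : ℝ × ℝ) ∈ Icc (0:ℝ) 1 ×ˢ Icc (t - 2*l) (t + 2*l) := by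
        intro y hy
        refine ⟨hIcc01 hy, ?_⟩
        have h2 := hθJ y hy
        rw [abs_le] at h2
        have h3 : l * (2 - y) ≤ 2 * l := by nlinarith [hy.1]
        constructor <;> linarith [h2.1, h2.2]
      have hucurve : ContinuousOn (fun y => u y (θ y)) (Icc 0 x) :=
        hucont.comp (continuous_id.prodMk hθcont).continuousOn hmaps
      have hvcurve : ContinuousOn (fun y => v y (θ y)) (Icc 0 x) :=
        hvcont.comp (continuous_id.prodMk hθcont).continuousOn hmaps
      set F : ℝ → ℝ := fun y => fu y (u y (θ y)) (v y (θ y)) * gu y with hFdef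
      have hFc : ContinuousOn F (Icc 0 x) := by
        refine ContinuousOn.mul ?_ (hguc.continuousOn)
        exact hfuc.comp (continuousOn_id.prodMk (hucurve.prodMk hvcurve))
          (fun y hy => ⟨hIcc01 hy, mem_univ _⟩)
      have hwd : ∀ y ∈ Ioo (0:ℝ) x, HasDerivAt (fun y => u y (θ y)) (F y) y := by
        intro y hy
        have hy' : y ∈ Icc (0:ℝ) x := Ioo_subset_Icc_self hy
        have hyI : y ∈ Ioo (0:ℝ) 1 := ⟨hy.1, lt_of_lt_of_le hy.2 hx.2⟩
        have h := aux_chain u ux ut hdu huxc θ (gu y) y hyI (hθpos y hy') (hθder y)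
        convert h using 1
        have hmemq : θ y ∈ Ici (0:ℝ) := le_of_lt (hθpos y hy')
        have heq := (hD y (hIcc01 hy') (θ y) hmemq).2.2.2.2.1
        have hlu0 : (0:ℝ) < lu y :=
          lt_of_lt_of_le (by positivity) (hlub y (hIcc01 hy'))
        have hguy : gu y = 1 / lu y := by
          simp only [hgudef, hLudef]; rw [hcl_id y (hIcc01 hy')]
        rw [heq, hguy]
        simp only [hFdef, hguy]
        field_simp
        ring
      have hFb : ∀ y ∈ Icc (0:ℝ) x, |F y| ≤ l * lF * B y := by
        intro y hy
        have hy1 := hIcc01 hy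
        have h1 : |fu y (u y (θ y)) (v y (θ y))| ≤ lF * max |u y (θ y)| |v y (θ y)| := by
          have h2 := hfulip y hy1 (u y (θ y)) (v y (θ y)) 0 0
          rw [(hF0 y hy1).1] at h2
          simpa using h2
        have h2 : max |u y (θ y)| |v y (θ y)| ≤ B y := hB y hy1 (θ y) (hθJ y hy)
        have h3 : |F y| = |fu y (u y (θ y)) (v y (θ y))| * |gu y| := abs_mul _ _
        rw [h3]
        have h4 : |gu y| ≤ l := by rw [abs_of_pos (hgu_pos y)]; exact hgu_le y
        have h5 : |fu y (u y (θ y)) (v y (θ y))| ≤ lF * B y :=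
          le_trans h1 (mul_le_mul_of_nonneg_left h2 hlF)
        calc |fu y (u y (θ y)) (v y (θ y))| * |gu y| ≤ (lF * B y) * l := by
              apply mul_le_mul h5 h4 (abs_nonneg _)
              have := hBnn y hy1; positivity
          _ = l * lF * B y := by ring
      have h0 : |u 0 (θ 0)| ≤ η := (hbd (θ 0) (hθT1 0 ⟨le_rfl, hx.1⟩)).1
      have hθx : θ x = s := by simp only [hθdef]; ring
      have hFi : IntervalIntegrable F volume 0 x := by
        apply ContinuousOn.intervalIntegrable; rwa [uIcc_of_le hx.1]
      exact hest u F θ hucurve hwd hFi hFb h0 hθx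
    · -- v component
      set θ : ℝ → ℝ := fun y => s + Av x - Av y with hθdef
      have hθJ : ∀ y ∈ Icc (0:ℝ) x, |θ y - t| ≤ l * (2 - y) := by
        intro y hy
        have h1 : |θ y - s| ≤ l * (x - y) := by
          have he : θ y - s = Av x - Av y := by simp only [hθdef]; ring
          rw [he]
          calc |Av x - Av y| ≤ l * |x - y| := hAvlip x y
            _ = l * (x - y) := by
                rw [abs_of_nonneg (by linarith [hy.2] : (0:ℝ) ≤ x - y)]
        calc |θ y - t| ≤ |θ y - s| + |s - t| := abs_sub_le _ _ _
          _ ≤ l * (x - y) + l * (2 - x) := add_le_add h1 hs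
          _ = l * (2 - y) := by ring
      have hθT1 : ∀ y ∈ Icc (0:ℝ) x, T1 ≤ θ y := by
        intro y hy
        have h2 := hθJ y hy
        rw [abs_le] at h2
        have h3 : l * (2 - y) ≤ 2 * l := by nlinarith [hy.1]
        linarith [h2.1]
      have hθpos : ∀ y ∈ Icc (0:ℝ) x, 0 < θ y := fun y hy =>
        lt_of_lt_of_le (by linarith : (0:ℝ) < T1) (hθT1 y hy)
      have hθcont : Continuous θ := (continuous_const.sub hAvC)
      have hθder : ∀ y, HasDerivAt θ (-gv y) y := fun y => (hAvder y).const_sub _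
      have hmaps : ∀ y ∈ Icc (0:ℝ) x,
          ((y, θ y) : ℝ × ℝ) ∈ Icc (0:ℝ) 1 ×ˢ Icc (t - 2*l) (t + 2*l) := by
        intro y hy
        refine ⟨hIcc01 hy, ?_⟩
        have h2 := hθJ y hy
        rw [abs_le] at h2
        have h3 : l * (2 - y) ≤ 2 * l := by nlinarith [hy.1]
        constructor <;> linarith [h2.1, h2.2]
      have hucurve : ContinuousOn (fun y => u y (θ y)) (Icc 0 x) :=
        hucont.comp (continuous_id.prodMk hθcont).continuousOn hmaps
      have hvcurve : ContinuousOn (fun y => v y (θ y)) (Icc 0 x) :=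
        hvcont.comp (continuous_id.prodMk hθcont).continuousOn hmaps
      set F : ℝ → ℝ := fun y => -(fv y (u y (θ y)) (v y (θ y)) * gv y) with hFdef
      have hFc : ContinuousOn F (Icc 0 x) := by
        refine ContinuousOn.neg ?_
        refine ContinuousOn.mul ?_ (hgvc.continuousOn)
        exact hfvc.comp (continuousOn_id.prodMk (hucurve.prodMk hvcurve))
          (fun y hy => ⟨hIcc01 hy, mem_univ _⟩)
      have hwd : ∀ y ∈ Ioo (0:ℝ) x, HasDerivAt (fun y => v y (θ y)) (F y) y := by
        intro y hy
        have hy' : y ∈ Icc (0:ℝ) x := Ioo_subset_Icc_self hy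
        have hyI : y ∈ Ioo (0:ℝ) 1 := ⟨hy.1, lt_of_lt_of_le hy.2 hx.2⟩
        have h := aux_chain v vx vt hdv hvxc θ (-gv y) y hyI (hθpos y hy') (hθder y)
        convert h using 1
        have hmemq : θ y ∈ Ici (0:ℝ) := le_of_lt (hθpos y hy')
        have heq := (hD y (hIcc01 hy') (θ y) hmemq).2.2.2.2.2
        have hlv0 : (0:ℝ) < lv y :=
          lt_of_lt_of_le (by positivity) (hlvb y (hIcc01 hy'))
        have hgvy : gv y = 1 / lv y := by
          simp only [hgvdef, hLvdef]; rw [hcl_id y (hIcc01 hy')]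
        rw [heq]
        simp only [hFdef, hgvy]
        field_simp
        ring
      have hFb : ∀ y ∈ Icc (0:ℝ) x, |F y| ≤ l * lF * B y := by
        intro y hy
        have hy1 := hIcc01 hy
        have h1 : |fv y (u y (θ y)) (v y (θ y))| ≤ lF * max |u y (θ y)| |v y (θ y)| := by
          have h2 := hfvlip y hy1 (u y (θ y)) (v y (θ y)) 0 0
          rw [(hF0 y hy1).2] at h2
          simpa using h2
        have h2 : max |u y (θ y)| |v y (θ y)| ≤ B y := hB y hy1 (θ y) (hθJ y hy)
        have h3 : |F y| = |fv y (u y (θ y)) (v y (θ y))| * |gv y| := by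
          simp only [hFdef]; rw [abs_neg, abs_mul]
        rw [h3]
        have h4 : |gv y| ≤ l := by rw [abs_of_pos (hgv_pos y)]; exact hgv_le y
        have h5 : |fv y (u y (θ y)) (v y (θ y))| ≤ lF * B y :=
          le_trans h1 (mul_le_mul_of_nonneg_left h2 hlF)
        calc |fv y (u y (θ y)) (v y (θ y))| * |gv y| ≤ (lF * B y) * l := by
              apply mul_le_mul h5 h4 (abs_nonneg _)
              have := hBnn y hy1; positivity
          _ = l * lF * B y := by ring
      have h0 : |v 0 (θ 0)| ≤ η := (hbd (θ 0) (hθT1 0 ⟨le_rfl, hx.1⟩)).2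
      have hθx : θ x = s := by simp only [hθdef]; ring
      have hFi : IntervalIntegrable F volume 0 x := by
        apply ContinuousOn.intervalIntegrable; rwa [uIcc_of_le hx.1]
      exact hest v F θ hvcurve hwd hFi hFb h0 hθx
  -- polynomial integral computation
  have hFint : ∀ (m : ℕ) (x : ℝ),
      ∫ y in (0:ℝ)..x, l * lF * ((l * lF * y)^m / m.factorial)
        = (l * lF * x)^(m+1) / (m+1).factorial := by
    intro m x
    have h1 : (fun y : ℝ => l * lF * ((l * lF * y)^m / m.factorial))
        = fun y => ((l * lF)^(m+1) / m.factorial) * y^m := by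
      funext y; rw [mul_pow]; ring
    rw [h1, intervalIntegral.integral_const_mul, integral_pow]
    have h2 : ((0:ℝ))^(m+1) = 0 := zero_pow (Nat.succ_ne_zero m)
    rw [h2, mul_pow, Nat.factorial_succ]
    have h3 : ((m.factorial : ℝ)) ≠ 0 := Nat.cast_ne_zero.mpr (Nat.factorial_ne_zero m)
    have h4 : ((m:ℝ) + 1) ≠ 0 := by positivity
    push_cast
    field_simp
    ring
  -- induction
  have hind : ∀ k : ℕ, ∀ x ∈ Icc (0:ℝ) 1, ∀ s : ℝ, |s - t| ≤ l * (2 - x) →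
      max |u x s| |v x s| ≤ η * (∑ i ∈ Finset.range k, (l*lF*x)^i / i.factorial)
        + C * ((l*lF*x)^k / k.factorial) := by
    intro k
    induction k with
    | zero =>
      intro x hx s hs
      have := hC' x hx s (le_trans hs (by nlinarith [hx.1]))
      simpa using this
    | succ k ih =>
      intro x hx s hs
      set B : ℝ → ℝ := fun y => η * (∑ i ∈ Finset.range k, (l*lF*y)^i / i.factorial)
        + C * ((l*lF*y)^k / k.factorial) with hBdef
      have hBcont : Continuous B := by
        apply Continuous.add
        · exact continuous_const.mul (continuous_finset_sum _ (fun i _ => by fun_prop))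
        · fun_prop
      have hstep := hcore B hBcont.continuousOn (fun y hy τ hτ => ih y hy τ hτ) x hx s hs
      refine le_trans hstep ?_
      have hBdecomp : ∀ y : ℝ, l * lF * B y
          = (∑ i ∈ Finset.range k, η * (l * lF * ((l*lF*y)^i / i.factorial)))
            + C * (l * lF * ((l*lF*y)^k / k.factorial)) := by
        intro y
        have he : ∑ i ∈ Finset.range k, η * (l * lF * ((l*lF*y)^i / i.factorial))
            = (η * (l * lF)) * ∑ i ∈ Finset.range k, (l*lF*y)^i / i.factorial := by
          rw [Finset.mul_sum]
          exact Finset.sum_congr rfl (fun i _ => by ring)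
        rw [he]
        simp only [hBdef]
        ring
      have hint_i : ∀ i : ℕ, IntervalIntegrable
          (fun y => η * (l * lF * ((l*lF*y)^i / i.factorial))) volume 0 x :=
        fun i => (Continuous.intervalIntegrable (by fun_prop) _ _)
      have hint_sum : IntervalIntegrable
          (fun y => ∑ i ∈ Finset.range k, η * (l * lF * ((l*lF*y)^i / i.factorial)))
          volume 0 x :=
        Continuous.intervalIntegrable (continuous_finset_sum _ (fun i _ => by fun_prop)) _ _
      have hint_last : IntervalIntegrable
          (fun y => C * (l * lF * ((l*lF*y)^k / k.factorial))) volume 0 x :=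
        Continuous.intervalIntegrable (by fun_prop) _ _
      have hI : ∫ y in (0:ℝ)..x, l * lF * B y
          = η * (∑ i ∈ Finset.range k, (l*lF*x)^(i+1) / (i+1).factorial)
            + C * ((l*lF*x)^(k+1) / (k+1).factorial) := by
        rw [intervalIntegral.integral_congr (fun y _ => hBdecomp y)]
        rw [intervalIntegral.integral_add hint_sum hint_last]
        rw [intervalIntegral.integral_finset_sum (fun i _ => hint_i i)]
        rw [intervalIntegral.integral_const_mul, hFint k x]
        have : ∀ i ∈ Finset.range k,
            ∫ y in (0:ℝ)..x, η * (l * lF * ((l*lF*y)^i / i.factorial))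
              = η * ((l*lF*x)^(i+1) / (i+1).factorial) := by
          intro i _
          rw [intervalIntegral.integral_const_mul, hFint i x]
        rw [Finset.sum_congr rfl this, ← Finset.mul_sum]
      rw [hI]
      have hsucc : ∑ i ∈ Finset.range (k+1), (l*lF*x)^i / i.factorial
          = (∑ i ∈ Finset.range k, (l*lF*x)^(i+1) / (i+1).factorial) + 1 := by
        rw [Finset.sum_range_succ']
        norm_num
      rw [hsucc]
      apply le_of_eq
      ring
  -- conclude
  intro x hx
  have hx2 : |t - t| ≤ l * (2 - x) := by rw [sub_self, abs_zero]; nlinarith [hx.2]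
  have hcx : l * lF * x ≤ l * lF := by nlinarith [hx.1, hx.2]
  have hcx0 : 0 ≤ l * lF * x := by
    have := hx.1; positivity
  have h1 : ∀ k : ℕ, max |u x t| |v x t|
      ≤ η * Real.exp (l * lF) + C * ((l*lF)^k / k.factorial) := by
    intro k
    have h2 := hind k x hx t hx2
    have h3 : (∑ i ∈ Finset.range k, (l*lF*x)^i / i.factorial) ≤ Real.exp (l*lF) := by
      calc (∑ i ∈ Finset.range k, (l*lF*x)^i / i.factorial)
          ≤ ∑ i ∈ Finset.range k, (l*lF)^i / i.factorial := by
            apply Finset.sum_le_sum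
            intro i _
            gcongr
        _ ≤ Real.exp (l*lF) := Real.sum_le_exp_of_nonneg hc k
    have h4 : (l*lF*x)^k / k.factorial ≤ (l*lF)^k / k.factorial := by
      gcongr
    calc max |u x t| |v x t|
        ≤ η * (∑ i ∈ Finset.range k, (l*lF*x)^i / i.factorial)
          + C * ((l*lF*x)^k / k.factorial) := h2
      _ ≤ η * Real.exp (l*lF) + C * ((l*lF)^k / k.factorial) :=
          add_le_add (mul_le_mul_of_nonneg_left h3 hη) (mul_le_mul_of_nonneg_left h4 hC0)
  have h5 : Tendsto (fun k : ℕ => η * Real.exp (l*lF) + C * ((l*lF)^k / k.factorial))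
      atTop (nhds (η * Real.exp (l*lF))) := by
    have h6 := (FloorSemiring.tendsto_pow_div_factorial_atTop (l*lF)).const_mul C
    rw [mul_zero] at h6
    simpa using tendsto_const_nhds.add h6
  exact ge_of_tendsto h5 (Filter.Eventually.of_forall h1)


/-- Lemma 3: assume the origin is an equilibrium
(`f^u(x,0,0) = f^v(x,0,0) = 0`, `f⁰(0,0,t) = g⁰(0,0,t) = 0`), let `K` be globally
Lipschitz in `X` with `K(0,t) = 0`, and suppose the closed-loop ODE
`Ẏ = f⁰(Y, K(Y,t), t)` has a globally asymptotically stable equilibrium at the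
origin (uniform stability plus global attractivity, as stated).  If `(u,v,X)` is
a classical solution on `[0,1] × [0,∞)` of the semilinear system with the ODE
coupling at `x = 0` and `v(0,t) = K(X(t),t)` for all `t ≥ T₀` (finite `T₀ ≥ 0`),
then `X(t) → 0` and `sup_{x ∈ [0,1]} max(|u(x,t)|,|v(x,t)|) → 0` as `t → ∞`. -/
theorem statement4 {n : ℕ}
    (lu lv : ℝ → ℝ) (fu fv : ℝ → ℝ → ℝ → ℝ) (l lF : ℝ)
    (f0 : (Fin n → ℝ) → ℝ → ℝ → (Fin n → ℝ)) (g0 : (Fin n → ℝ) → ℝ → ℝ → ℝ)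
    (lfX lfv lgX lgv lK : ℝ)
    (K : (Fin n → ℝ) → ℝ → ℝ)
    (hdata : SemilinearData lu lv fu fv l lF)
    (hcpl : CouplingData f0 g0 lfX lfv lgX lgv)
    (hF0 : ∀ x ∈ Icc (0:ℝ) 1, fu x 0 0 = 0 ∧ fv x 0 0 = 0)
    (hf00 : ∀ t : ℝ, f0 0 0 t = 0)
    (hg00 : ∀ t : ℝ, g0 0 0 t = 0)
    (hK_lip : ∀ (X Y : Fin n → ℝ) (t : ℝ), |K X t - K Y t| ≤ lK * ‖X - Y‖)
    (hK0 : ∀ t : ℝ, K 0 t = 0)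
    (hstab : ∀ ε : ℝ, 0 < ε → ∃ δ : ℝ, 0 < δ ∧
      ∀ (t0 : ℝ) (Y : ℝ → Fin n → ℝ),
        (∀ t : ℝ, t0 ≤ t → HasDerivAt Y (f0 (Y t) (K (Y t) t) t) t) →
        ‖Y t0‖ ≤ δ → ∀ t : ℝ, t0 ≤ t → ‖Y t‖ ≤ ε)
    (hattr : ∀ (t0 : ℝ) (Y : ℝ → Fin n → ℝ),
      (∀ t : ℝ, t0 ≤ t → HasDerivAt Y (f0 (Y t) (K (Y t) t) t) t) →
      Tendsto Y atTop (nhds 0))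
    (u v ux ut vx vt : ℝ → ℝ → ℝ) (X : ℝ → Fin n → ℝ)
    (hsol : IsSemilinearSolution lu lv fu fv (Ici 0) u v ux ut vx vt)
    (hode : ∀ t ∈ Ici (0:ℝ),
      HasDerivAt X (f0 (X t) (v 0 t) t) t ∧ u 0 t = g0 (X t) (v 0 t) t)
    (T0 : ℝ) (hT0 : 0 ≤ T0)
    (hvK : ∀ t : ℝ, T0 ≤ t → v 0 t = K (X t) t) :
    Tendsto X atTop (nhds 0) ∧
    (∀ ε : ℝ, 0 < ε → ∃ T : ℝ, ∀ t : ℝ, T ≤ t →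
      ∀ x ∈ Icc (0:ℝ) 1, max |u x t| |v x t| ≤ ε) := by
  have hXde : ∀ t : ℝ, T0 ≤ t → HasDerivAt X (f0 (X t) (K (X t) t) t) t := by
    intro t ht
    have h1 := (hode t (le_trans hT0 ht)).1
    rwa [hvK t ht] at h1
  have hXtend : Tendsto X atTop (nhds 0) := hattr T0 X hXde
  refine ⟨hXtend, ?_⟩
  intro ε hε
  have hl : 0 < l := hdata.1
  set η : ℝ := ε / Real.exp (l * lF) with hηdef
  have hexp : 0 < Real.exp (l * lF) := Real.exp_pos _
  have hη : 0 < η := by positivity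
  set Cb : ℝ := |lgX| + |lgv| * |lK| + |lK| + 1 with hCbdef
  have hCb : 0 < Cb := by positivity
  have hXnorm : Tendsto (fun s => ‖X s‖) atTop (nhds 0) := by
    simpa using hXtend.norm
  have hev : ∀ᶠ s in atTop, ‖X s‖ < η / Cb :=
    hXnorm.eventually_lt_const (by positivity)
  obtain ⟨T2, hT2⟩ := Filter.eventually_atTop.mp hev
  set T1 : ℝ := max (max T0 1) T2 with hT1def
  have hT1 : 1 ≤ T1 := le_trans (le_max_right T0 1) (le_max_left _ _)
  have hT0T1 : T0 ≤ T1 := le_trans (le_max_left T0 1) (le_max_left _ _)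
  have hbd : ∀ s : ℝ, T1 ≤ s → |u 0 s| ≤ η ∧ |v 0 s| ≤ η := by
    intro s hsT1
    have hsT0 : T0 ≤ s := le_trans hT0T1 hsT1
    have hs0 : s ∈ Ici (0:ℝ) := le_trans hT0 hsT0
    have hXs : ‖X s‖ ≤ η / Cb := le_of_lt (hT2 s (le_trans (le_max_right _ _) hsT1))
    have hXs0 : (0:ℝ) ≤ ‖X s‖ := norm_nonneg _
    have hv : |v 0 s| ≤ |lK| * ‖X s‖ := by
      rw [hvK s hsT0]
      have h3 := hK_lip (X s) 0 s
      rw [hK0 s, sub_zero, sub_zero] at h3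
      calc |K (X s) s| ≤ lK * ‖X s‖ := h3
        _ ≤ |lK| * ‖X s‖ := mul_le_mul_of_nonneg_right (le_abs_self _) hXs0
    have hu : |u 0 s| ≤ (|lgX| + |lgv| * |lK|) * ‖X s‖ := by
      rw [(hode s hs0).2]
      have h4 := (hcpl.2.2 (X s) 0 (v 0 s) 0 s).2
      rw [hg00 s, sub_zero, sub_zero, sub_zero] at h4
      calc |g0 (X s) (v 0 s) s| ≤ lgX * ‖X s‖ + lgv * |v 0 s| := h4
        _ ≤ |lgX| * ‖X s‖ + |lgv| * |v 0 s| :=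
            add_le_add (mul_le_mul_of_nonneg_right (le_abs_self _) hXs0)
              (mul_le_mul_of_nonneg_right (le_abs_self _) (abs_nonneg _))
        _ ≤ |lgX| * ‖X s‖ + |lgv| * (|lK| * ‖X s‖) :=
            add_le_add le_rfl (mul_le_mul_of_nonneg_left hv (abs_nonneg _))
        _ = (|lgX| + |lgv| * |lK|) * ‖X s‖ := by ring
    have hfrac : Cb * (η / Cb) = η := by field_simp
    constructor
    · calc |u 0 s| ≤ (|lgX| + |lgv| * |lK|) * ‖X s‖ := hu
        _ ≤ Cb * (η / Cb) := by
            apply mul_le_mul _ hXs hXs0 (le_of_lt hCb)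
            simp only [hCbdef]
            nlinarith [abs_nonneg lK]
        _ = η := hfrac
    · calc |v 0 s| ≤ |lK| * ‖X s‖ := hv
        _ ≤ Cb * (η / Cb) := by
            apply mul_le_mul _ hXs hXs0 (le_of_lt hCb)
            simp only [hCbdef]
            nlinarith [abs_nonneg lgX, abs_nonneg lgv, abs_nonneg lK, mul_nonneg (abs_nonneg lgv) (abs_nonneg lK)]
        _ = η := hfrac
  refine ⟨T1 + 2 * l, fun t ht x hx => ?_⟩
  have hcone := cone_lemma lu lv fu fv l lF hdata hF0 u v ux ut vx vt hsol
    η T1 t (le_of_lt hη) hT1 hbd ht x hx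
  calc max |u x t| |v x t| ≤ η * Real.exp (l * lF) := hcone
    _ = ε := by rw [hηdef]; field_simp
end
end

section
/- Let (u,v) be a classical solution of the semilinear system on [0,1] × I, and fix a time t such that τ̌(t;x) ∈ I for all x ∈ [0,1]. Then the transformed states satisfy, for all x ∈ [0,1]: (i) ∂_x ǔ(x,t) = f^u(x, ǔ(x,t), v̌(x,t)) / λ^u(x); and (ii) ∂_t v̌(x,t) = μ̂(x) ∂_x v̌(x,t) + ν̂(x) f^v(x, ǔ(x,t), v̌(x,t)) (at all (x,t) where τ̌(s;x) ∈ I for s near t). -/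
open Set MeasureTheory intervalIntegral Filter

noncomputable section

lemma chain_aux {w wx' : ℝ → ℝ → ℝ} {I : Set ℝ} {σ : ℝ → ℝ} {x σ' wt' : ℝ}
    (hx0 : x ∈ Icc (0:ℝ) 1)
    (hdx : ∀ p ∈ Icc (0:ℝ) 1, ∀ s ∈ I, HasDerivAt (fun y => w y s) (wx' p s) p)
    (hdt : HasDerivAt (fun s => w x s) wt' (σ x))
    (hcx : ContinuousOn (fun p : ℝ × ℝ => wx' p.1 p.2) (Icc (0:ℝ) 1 ×ˢ I))
    (hσ : HasDerivWithinAt σ σ' (Icc (0:ℝ) 1) x)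
    (hσI : ∀ y ∈ Icc (0:ℝ) 1, σ y ∈ I) :
    HasDerivWithinAt (fun y => w y (σ y)) (wx' x (σ x) + wt' * σ') (Icc (0:ℝ) 1) x := by
  have hB : HasDerivWithinAt (fun y => w x (σ y)) (wt' * σ') (Icc (0:ℝ) 1) x :=
    hdt.comp_hasDerivWithinAt x hσ
  have hA : HasDerivWithinAt (fun y => w y (σ y) - w x (σ y)) (wx' x (σ x)) (Icc (0:ℝ) 1) x := by
    rw [hasDerivWithinAt_iff_tendsto_slope]
    rw [Metric.tendsto_nhdsWithin_nhds]
    intro ε hε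
    have hcx' := hcx (x, σ x) ⟨hx0, hσI x hx0⟩
    rw [Metric.continuousWithinAt_iff] at hcx'
    obtain ⟨δ, hδ, hδ'⟩ := hcx' ε hε
    have hσc := hσ.continuousWithinAt
    rw [Metric.continuousWithinAt_iff] at hσc
    obtain ⟨δ₁, hδ₁, hδ₁'⟩ := hσc δ hδ
    refine ⟨min δ₁ δ, lt_min hδ₁ hδ, ?_⟩
    intro y hy hyd
    have hyI : y ∈ Icc (0:ℝ) 1 := hy.1
    have hyx : y ≠ x := hy.2
    have hσy : σ y ∈ I := hσI y hyI
    have hdσ : dist (σ y) (σ x) < δ := hδ₁' hyI (lt_of_lt_of_le hyd (min_le_left _ _))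
    have hyd' : dist y x < δ := lt_of_lt_of_le hyd (min_le_right _ _)
    -- MVT on the segment between x and y
    have key : ∃ ξ ∈ Icc (0:ℝ) 1, |ξ - x| < δ ∧
        wx' ξ (σ y) = (w y (σ y) - w x (σ y)) / (y - x) := by
      rcases hyx.lt_or_gt with h | h
      · -- y < x
        obtain ⟨ξ, hξ, hξ'⟩ := exists_hasDerivAt_eq_slope (fun p => w p (σ y))
          (fun p => wx' p (σ y)) h
          (fun p hp => (hdx p ⟨le_trans hyI.1 hp.1, le_trans hp.2 hx0.2⟩ (σ y)
            hσy).continuousAt.continuousWithinAt)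
          (fun p hp => hdx p ⟨le_trans hyI.1 hp.1.le, le_trans hp.2.le hx0.2⟩ (σ y) hσy)
        refine ⟨ξ, ⟨le_trans hyI.1 hξ.1.le, le_trans hξ.2.le hx0.2⟩, ?_, ?_⟩
        · rw [abs_sub_lt_iff]
          constructor
          · linarith [hξ.2]
          · rw [Real.dist_eq, abs_sub_lt_iff] at hyd'
            linarith [hξ.1, hyd'.2]
        · rw [hξ']
          rw [div_eq_div_iff (by linarith) (by intro hc; exact hyx (by linarith))]
          ring
      · -- x < y
        obtain ⟨ξ, hξ, hξ'⟩ := exists_hasDerivAt_eq_slope (fun p => w p (σ y))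
          (fun p => wx' p (σ y)) h
          (fun p hp => (hdx p ⟨le_trans hx0.1 hp.1, le_trans hp.2 hyI.2⟩ (σ y)
            hσy).continuousAt.continuousWithinAt)
          (fun p hp => hdx p ⟨le_trans hx0.1 hp.1.le, le_trans hp.2.le hyI.2⟩ (σ y) hσy)
        refine ⟨ξ, ⟨le_trans hx0.1 hξ.1.le, le_trans hξ.2.le hyI.2⟩, ?_, hξ'⟩
        rw [abs_sub_lt_iff]
        constructor
        · rw [Real.dist_eq, abs_sub_lt_iff] at hyd'
          linarith [hξ.2, hyd'.1]
        · linarith [hξ.1]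
    obtain ⟨ξ, hξI, hξd, hξeq⟩ := key
    have hslope : slope (fun y => w y (σ y) - w x (σ y)) x y = wx' ξ (σ y) := by
      rw [slope_def_field, hξeq]
      congr 1
      ring
    rw [hslope]
    have := hδ' (x := (ξ, σ y)) ⟨hξI, hσy⟩ (by
      rw [Prod.dist_eq]
      exact max_lt (by rwa [Real.dist_eq]) hdσ)
    exact this
  have := hA.add hB
  exact this.congr_of_mem (fun y _ => by simp) hx0

/-- the transformed (past-characteristic) states
`ǔ(x,t) = u(x, τ̌(t;x))`, `v̌(x,t) = v(x, τ̌(t;x))`, with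
`τ̌(t;x) = t - ∫_x^1 dξ/λ^u(ξ)`, satisfy
(i) `∂ₓ ǔ = f^u(x,ǔ,v̌)/λ^u(x)` (derivative within `[0,1]`, one-sided at the
endpoints), for a fixed `t` with `τ̌(t;x) ∈ I` for all `x ∈ [0,1]`; and
(ii) `∂ₜ v̌ = μ̂(x) ∂ₓ v̌ + ν̂(x) f^v(x,ǔ,v̌)` with `ν̂ = λ^u/(λ^u+λ^v)` and
`μ̂ = λ^v ν̂`, at all `(x,t)` such that `τ̌(s;x) ∈ I` for `s` near `t`;
the `x`-derivative `d` of `v̌(·,t)` is asserted to exist alongside. -/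
theorem statement7
    (lu lv : ℝ → ℝ) (fu fv : ℝ → ℝ → ℝ → ℝ) (l lF : ℝ) (I : Set ℝ)
    (u v ux ut vx vt : ℝ → ℝ → ℝ)
    (hdata : SemilinearData lu lv fu fv l lF)
    (hsol : IsSemilinearSolution lu lv fu fv I u v ux ut vx vt)
    (t : ℝ)
    (ht : ∀ x ∈ Icc (0:ℝ) 1, (t - ∫ ξ in x..(1:ℝ), (lu ξ)⁻¹) ∈ I) :
    (∀ x ∈ Icc (0:ℝ) 1,
      HasDerivWithinAt (fun y => u y (t - ∫ ξ in y..(1:ℝ), (lu ξ)⁻¹))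
        (fu x (u x (t - ∫ ξ in x..(1:ℝ), (lu ξ)⁻¹))
              (v x (t - ∫ ξ in x..(1:ℝ), (lu ξ)⁻¹)) / lu x)
        (Icc (0:ℝ) 1) x) ∧
    (∀ x ∈ Icc (0:ℝ) 1,
      (∀ᶠ s in nhds t, (s - ∫ ξ in x..(1:ℝ), (lu ξ)⁻¹) ∈ I) →
      ∃ d : ℝ,
        HasDerivWithinAt (fun y => v y (t - ∫ ξ in y..(1:ℝ), (lu ξ)⁻¹)) d
          (Icc (0:ℝ) 1) x ∧
        HasDerivAt (fun s => v x (s - ∫ ξ in x..(1:ℝ), (lu ξ)⁻¹))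
          (lv x * (lu x / (lu x + lv x)) * d +
            (lu x / (lu x + lv x)) *
              fv x (u x (t - ∫ ξ in x..(1:ℝ), (lu ξ)⁻¹))
                   (v x (t - ∫ ξ in x..(1:ℝ), (lu ξ)⁻¹))) t) := by
  obtain ⟨hl, hluc, hlvc, hlul, hlvl, _, _, _, _⟩ := hdata
  obtain ⟨hpde, hux, hut, hvx, hvt⟩ := hsol
  set g : ℝ → ℝ := fun ξ => (lu ξ)⁻¹ with hg
  have hlupos : ∀ x ∈ Icc (0:ℝ) 1, 0 < lu x := fun x hx =>
    lt_of_lt_of_le (by positivity) (hlul x hx)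
  have hlvpos : ∀ x ∈ Icc (0:ℝ) 1, 0 < lv x := fun x hx =>
    lt_of_lt_of_le (by positivity) (hlvl x hx)
  have hgc : ContinuousOn g (Icc (0:ℝ) 1) :=
    hluc.inv₀ (fun x hx => (hlupos x hx).ne')
  set σ : ℝ → ℝ := fun y => t - ∫ ξ in y..(1:ℝ), g ξ with hσdef
  have hσd : ∀ x ∈ Icc (0:ℝ) 1, HasDerivWithinAt σ (g x) (Icc (0:ℝ) 1) x := by
    intro x hx
    haveI : Fact (x ∈ Icc (0:ℝ) 1) := ⟨hx⟩
    have hint : IntervalIntegrable g volume x 1 :=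
      (hgc.mono (by rw [uIcc_of_le hx.2]; exact Icc_subset_Icc hx.1 le_rfl)).intervalIntegrable
    have hmeas : StronglyMeasurableAtFilter g (nhdsWithin x (Icc (0:ℝ) 1)) volume :=
      hgc.stronglyMeasurableAtFilter_nhdsWithin measurableSet_Icc x
    have h1 : HasDerivWithinAt (fun y => ∫ ξ in y..(1:ℝ), g ξ) (-g x) (Icc (0:ℝ) 1) x :=
      integral_hasDerivWithinAt_left (f := g) hint (s := Icc (0:ℝ) 1) (t := Icc (0:ℝ) 1)
        hmeas (hgc x hx)
    have h2 := (hasDerivWithinAt_const x (Icc (0:ℝ) 1) t).sub h1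
    have h3 : (0:ℝ) - -g x = g x := by ring
    rw [h3] at h2
    exact h2
  have hσI : ∀ y ∈ Icc (0:ℝ) 1, σ y ∈ I := ht
  constructor
  · intro x hx
    have hτ : σ x ∈ I := hσI x hx
    obtain ⟨h1, h2, h3, h4, h5, h6⟩ := hpde x hx (σ x) hτ
    have hmain := chain_aux hx (fun p hp s hs => (hpde p hp s hs).1) h2 hux
      (hσd x hx) hσI
    have hlu0 : lu x ≠ 0 := (hlupos x hx).ne'
    have heq : ux x (σ x) + ut x (σ x) * g x = fu x (u x (σ x)) (v x (σ x)) / lu x := by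
      rw [h5]; simp only [hg]; field_simp; ring
    rw [heq] at hmain
    exact hmain
  · intro x hx _
    have hτ : σ x ∈ I := hσI x hx
    obtain ⟨h1, h2, h3, h4, h5, h6⟩ := hpde x hx (σ x) hτ
    have hmain := chain_aux hx (fun p hp s hs => (hpde p hp s hs).2.2.1) h4 hvx
      (hσd x hx) hσI
    refine ⟨vx x (σ x) + vt x (σ x) * g x, hmain, ?_⟩
    have hinner : HasDerivAt (fun s : ℝ => s - ∫ ξ in x..(1:ℝ), (lu ξ)⁻¹) 1 t :=
      (hasDerivAt_id t).sub_const _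
    have hcomp : HasDerivAt (fun s => v x (s - ∫ ξ in x..(1:ℝ), (lu ξ)⁻¹))
        (vt x (σ x) * 1) t := h4.comp t hinner
    have hlu0 : lu x ≠ 0 := (hlupos x hx).ne'
    have hsum0 : lu x + lv x ≠ 0 := by
      have := hlvpos x hx
      have := hlupos x hx
      positivity
    have heq : vt x (σ x) * 1 =
        lv x * (lu x / (lu x + lv x)) * (vx x (σ x) + vt x (σ x) * g x) +
          (lu x / (lu x + lv x)) * fv x (u x (σ x)) (v x (σ x)) := by
      have hfv : fv x (u x (σ x)) (v x (σ x)) = vt x (σ x) - lv x * vx x (σ x) := by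
        rw [h6]; ring
      rw [hfv, hg]
      field_simp
      ring
    rw [heq] at hcomp
    exact hcomp
end
end

section
/- Let λ^v : [0,1] × ℝ² → ℝ be continuous with 0 < 1/λ^v(x,z) ≤ l for all (x,z) and with z ↦ 1/λ^v(x,z) globally Lipschitz with constant l_λ uniformly in x, and let w : [0,1] × ℝ → ℝ² be continuous and globally Lipschitz in t with constant l_w uniformly in x. Then for every t ∈ ℝ there exists a unique continuous function τ : [0,1] → ℝ satisfying the integral equation τ(x) = t + ∫_x^1 dξ / λ^v(ξ, w(ξ, τ(ξ))) for all x ∈ [0,1]; moreover t ≤ τ(x) ≤ t + l for all x. -/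
open Set MeasureTheory intervalIntegral Filter
open scoped Topology NNReal

noncomputable section

/-- well-definedness of the characteristic time `τ^v(t;·)` for the
quasilinear system.  If `1/λ^v` is positive, bounded by `l`, and Lipschitz in the
state with constant `l_λ` uniformly in `x`, and the state trajectory
`w = (w₁,w₂)` is continuous and Lipschitz in `t` with constant `l_w` uniformly in
`x`, then for every `t` the fixed-point equation
`τ(x) = t + ∫_x^1 dξ/λ^v(ξ, w(ξ,τ(ξ)))` has a unique continuous solution on `[0,1]`,
and it satisfies `t ≤ τ(x) ≤ t + l`. -/
theorem statement10
    (lam : ℝ → ℝ → ℝ → ℝ) (w1 w2 : ℝ → ℝ → ℝ) (l llam lw : ℝ)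
    (hlam_cont : ContinuousOn (fun p : ℝ × ℝ × ℝ => lam p.1 p.2.1 p.2.2)
      (Icc (0:ℝ) 1 ×ˢ (univ : Set (ℝ × ℝ))))
    (hlam_bnd : ∀ x ∈ Icc (0:ℝ) 1, ∀ a b : ℝ,
      0 < (lam x a b)⁻¹ ∧ (lam x a b)⁻¹ ≤ l)
    (hlam_lip : ∀ x ∈ Icc (0:ℝ) 1, ∀ a b a' b' : ℝ,
      |(lam x a b)⁻¹ - (lam x a' b')⁻¹| ≤ llam * max |a - a'| |b - b'|)
    (hw_cont : ContinuousOn (fun p : ℝ × ℝ => (w1 p.1 p.2, w2 p.1 p.2))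
      (Icc (0:ℝ) 1 ×ˢ (univ : Set ℝ)))
    (hw_lip : ∀ x ∈ Icc (0:ℝ) 1, ∀ s s' : ℝ,
      max |w1 x s - w1 x s'| |w2 x s - w2 x s'| ≤ lw * |s - s'|)
    (t : ℝ) :
    ∃ τ : ℝ → ℝ, ContinuousOn τ (Icc (0:ℝ) 1) ∧
      (∀ x ∈ Icc (0:ℝ) 1,
        τ x = t + ∫ ξ in x..(1:ℝ), (lam ξ (w1 ξ (τ ξ)) (w2 ξ (τ ξ)))⁻¹) ∧
      (∀ x ∈ Icc (0:ℝ) 1, t ≤ τ x ∧ τ x ≤ t + l) ∧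
      (∀ σ : ℝ → ℝ, ContinuousOn σ (Icc (0:ℝ) 1) →
        (∀ x ∈ Icc (0:ℝ) 1,
          σ x = t + ∫ ξ in x..(1:ℝ), (lam ξ (w1 ξ (σ ξ)) (w2 ξ (σ ξ)))⁻¹) →
        ∀ x ∈ Icc (0:ℝ) 1, σ x = τ x) := by
  classical
  have h01 : (0:ℝ) ∈ Icc (0:ℝ) 1 := ⟨le_rfl, zero_le_one⟩
  have h11 : (1:ℝ) ∈ Icc (0:ℝ) 1 := ⟨zero_le_one, le_rfl⟩
  -- clamp to [0,1]
  set c : ℝ → ℝ := fun x => max 0 (min 1 x) with hc_def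
  have hc_mem : ∀ x, c x ∈ Icc (0:ℝ) 1 :=
    fun x => ⟨le_max_left _ _, max_le zero_le_one (min_le_left _ _)⟩
  have hc_id : ∀ x ∈ Icc (0:ℝ) 1, c x = x := by
    intro x hx
    simp only [hc_def]
    rw [min_eq_right hx.2, max_eq_right hx.1]
  have hc_cont : Continuous c := continuous_const.max (continuous_const.min continuous_id)
  -- the (clamped) integrand
  set f : ℝ → ℝ → ℝ := fun x s => (lam (c x) (w1 (c x) s) (w2 (c x) s))⁻¹ with hf_def
  have hl : ∀ x s : ℝ, 0 < f x s ∧ f x s ≤ l := fun x s => hlam_bnd (c x) (hc_mem x) _ _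
  have hl0 : 0 < l := (hl 0 0).1.trans_le (hl 0 0).2
  have hllam : 0 ≤ llam := by
    have h := hlam_lip 0 h01 1 0 0 0
    have h2 := abs_nonneg ((lam 0 1 0)⁻¹ - (lam 0 0 0)⁻¹)
    simp only [sub_zero, abs_one, abs_zero, max_eq_left zero_le_one, mul_one] at h
    linarith
  have hlw : 0 ≤ lw := by
    have h := hw_lip 0 h01 1 0
    have h2 : (0:ℝ) ≤ max |w1 0 1 - w1 0 0| |w2 0 1 - w2 0 0| :=
      le_max_of_le_left (abs_nonneg _)
    simp only [sub_zero, abs_one, mul_one] at h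
    linarith
  set K : ℝ≥0 := ⟨llam * lw, mul_nonneg hllam hlw⟩ with hK_def
  have hlipf : ∀ x : ℝ, LipschitzWith K (fun s => f x s) := by
    intro x
    apply LipschitzWith.of_dist_le_mul
    intro s s'
    rw [Real.dist_eq, Real.dist_eq]
    have h1 := hlam_lip (c x) (hc_mem x) (w1 (c x) s) (w2 (c x) s) (w1 (c x) s') (w2 (c x) s')
    have h2 := hw_lip (c x) (hc_mem x) s s'
    have h3 : llam * max |w1 (c x) s - w1 (c x) s'| |w2 (c x) s - w2 (c x) s'|
        ≤ llam * (lw * |s - s'|) := mul_le_mul_of_nonneg_left h2 hllam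
    have h4 := h1.trans h3
    rw [← mul_assoc] at h4
    exact h4
  have hlipV : ∀ x : ℝ, LipschitzWith K (fun s => -(f x s)) := by
    intro x
    apply LipschitzWith.of_dist_le_mul
    intro s s'
    have := (hlipf x).dist_le_mul s s'
    simpa [dist_neg_neg] using this
  -- joint continuity of f
  have hFcont : ContinuousOn (fun p : ℝ × ℝ => (lam p.1 (w1 p.1 p.2) (w2 p.1 p.2))⁻¹)
      (Icc (0:ℝ) 1 ×ˢ (univ : Set ℝ)) := by
    apply ContinuousOn.inv₀
    · exact hlam_cont.comp (continuousOn_fst.prodMk hw_cont) (fun p hp => ⟨hp.1, mem_univ _⟩)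
    · intro p hp
      exact ne_of_gt (inv_pos.mp (hlam_bnd p.1 hp.1 _ _).1)
  have hfc : Continuous (fun p : ℝ × ℝ => f p.1 p.2) := by
    have h : Continuous (fun p : ℝ × ℝ => (c p.1, p.2)) :=
      (hc_cont.comp continuous_fst).prodMk continuous_snd
    exact hFcont.comp_continuous h (fun p => ⟨hc_mem _, mem_univ _⟩)
  -- composition lemmas
  have hcomp : ∀ ρ : ℝ → ℝ, ContinuousOn ρ (Icc (0:ℝ) 1) →
      ContinuousOn (fun ξ => f ξ (ρ ξ)) (Icc (0:ℝ) 1) := by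
    intro ρ hρ
    exact hfc.comp_continuousOn ((continuous_id.continuousOn).prodMk hρ)
  have hint : ∀ ρ : ℝ → ℝ, ContinuousOn ρ (Icc (0:ℝ) 1) → ∀ u v : ℝ,
      u ∈ Icc (0:ℝ) 1 → v ∈ Icc (0:ℝ) 1 →
      IntervalIntegrable (fun ξ => f ξ (ρ ξ)) volume u v := by
    intro ρ hρ u v hu hv
    exact ((hcomp ρ hρ).mono (uIcc_subset_Icc hu hv)).intervalIntegrable
  have hcongr : ∀ (ρ : ℝ → ℝ) (u v : ℝ), u ∈ Icc (0:ℝ) 1 → v ∈ Icc (0:ℝ) 1 →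
      (∫ ξ in u..v, (lam ξ (w1 ξ (ρ ξ)) (w2 ξ (ρ ξ)))⁻¹) = ∫ ξ in u..v, f ξ (ρ ξ) := by
    intro ρ u v hu hv
    apply intervalIntegral.integral_congr
    intro ξ hξ
    have h := hc_id ξ (uIcc_subset_Icc hu hv hξ)
    simp only [hf_def, h]
  -- Picard-Lindelöf data
  have hpl : IsPicardLindelof (fun x s => -(f x s)) (tmin := 0) (tmax := 1) ⟨1, h11⟩ t
      ⟨l, hl0.le⟩ 0 ⟨l, hl0.le⟩ K := by
    refine ⟨?_, ?_, ?_, ?_⟩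
    · exact fun ξ _ => (hlipV ξ).lipschitzOnWith
    · intro x _
      exact ((hfc.comp (continuous_id.prodMk continuous_const)).neg).continuousOn
    · intro ξ _ x _
      rw [norm_neg, Real.norm_eq_abs, abs_of_pos (hl ξ x).1]
      exact (hl ξ x).2
    · show l * max ((1:ℝ) - 1) (1 - 0) ≤ l - 0
      norm_num
  obtain ⟨τ, hτ1', hτd⟩ := hpl.exists_eq_forall_mem_Icc_hasDerivWithinAt₀
  have hτ1 : τ 1 = t := hτ1'
  have hτc : ContinuousOn τ (Icc (0:ℝ) 1) := fun x hx => (hτd x hx).continuousWithinAt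
  -- τ satisfies the integral equation
  have hτeq : ∀ x ∈ Icc (0:ℝ) 1,
      τ x = t + ∫ ξ in x..(1:ℝ), (lam ξ (w1 ξ (τ ξ)) (w2 ξ (τ ξ)))⁻¹ := by
    intro x hx
    have hFint := hint τ hτc x 1 hx h11
    have hkey : (∫ ξ in x..(1:ℝ), -(f ξ (τ ξ))) = τ 1 - τ x := by
      apply intervalIntegral.integral_eq_sub_of_hasDeriv_right_of_le hx.2
        (hτc.mono (Icc_subset_Icc hx.1 le_rfl)) ?_ hFint.neg
      intro ξ hξ
      have hξ' : ξ ∈ Icc (0:ℝ) 1 := ⟨hx.1.trans hξ.1.le, hξ.2.le⟩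
      have hmem : Icc (0:ℝ) 1 ∈ 𝓝 ξ := Icc_mem_nhds (lt_of_le_of_lt hx.1 hξ.1) hξ.2
      exact ((hτd ξ hξ').hasDerivAt hmem).hasDerivWithinAt
    rw [intervalIntegral.integral_neg, hτ1] at hkey
    rw [hcongr τ x 1 hx h11]
    linarith
  -- bounds
  have hbnd : ∀ x ∈ Icc (0:ℝ) 1, t ≤ τ x ∧ τ x ≤ t + l := by
    intro x hx
    have he := hτeq x hx
    rw [hcongr τ x 1 hx h11] at he
    have hnn : 0 ≤ ∫ ξ in x..(1:ℝ), f ξ (τ ξ) :=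
      intervalIntegral.integral_nonneg hx.2 (fun u _ => (hl u (τ u)).1.le)
    have hub : (∫ ξ in x..(1:ℝ), f ξ (τ ξ)) ≤ ∫ _ in x..(1:ℝ), l := by
      apply intervalIntegral.integral_mono_on hx.2 (hint τ hτc x 1 hx h11)
        intervalIntegrable_const
      exact fun u _ => (hl u (τ u)).2
    rw [intervalIntegral.integral_const, smul_eq_mul] at hub
    have hx0 := hx.1
    constructor
    · rw [he]; linarith
    · rw [he]; nlinarith
  -- any continuous solution of the integral equation solves the ODE
  have hode : ∀ ρ : ℝ → ℝ, ContinuousOn ρ (Icc (0:ℝ) 1) →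
      (∀ x ∈ Icc (0:ℝ) 1, ρ x = t + ∫ ξ in x..(1:ℝ), (lam ξ (w1 ξ (ρ ξ)) (w2 ξ (ρ ξ)))⁻¹) →
      ∀ x ∈ Icc (0:ℝ) 1, HasDerivWithinAt ρ (-(f x (ρ x))) (Icc (0:ℝ) 1) x := by
    intro ρ hρc hρeq x hx
    haveI : Fact (x ∈ Icc (0:ℝ) 1) := ⟨hx⟩
    have hF := hcomp ρ hρc
    have hG : HasDerivWithinAt (fun u => ∫ ξ in (0:ℝ)..u, f ξ (ρ ξ)) (f x (ρ x))
        (Icc (0:ℝ) 1) x :=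
      intervalIntegral.integral_hasDerivWithinAt_right (hint ρ hρc 0 x h01 hx)
        (hF.stronglyMeasurableAtFilter_nhdsWithin measurableSet_Icc x) (hF x hx)
    have key : ∀ u ∈ Icc (0:ℝ) 1,
        ρ u = (t + ∫ ξ in (0:ℝ)..(1:ℝ), f ξ (ρ ξ)) - ∫ ξ in (0:ℝ)..u, f ξ (ρ ξ) := by
      intro u hu
      have h1 := hρeq u hu
      rw [hcongr ρ u 1 hu h11] at h1
      have h2 := intervalIntegral.integral_add_adjacent_intervals
        (hint ρ hρc 0 u h01 hu) (hint ρ hρc u 1 hu h11)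
      rw [h1]; linarith
    have hD : HasDerivWithinAt
        (fun u => (t + ∫ ξ in (0:ℝ)..(1:ℝ), f ξ (ρ ξ)) - ∫ ξ in (0:ℝ)..u, f ξ (ρ ξ))
        (-(f x (ρ x))) (Icc (0:ℝ) 1) x := hG.const_sub _
    exact hD.congr (fun y hy => key y hy) (key x hx)
  -- uniqueness
  have huniq : ∀ σ : ℝ → ℝ, ContinuousOn σ (Icc (0:ℝ) 1) →
      (∀ x ∈ Icc (0:ℝ) 1, σ x = t + ∫ ξ in x..(1:ℝ), (lam ξ (w1 ξ (σ ξ)) (w2 ξ (σ ξ)))⁻¹) →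
      ∀ x ∈ Icc (0:ℝ) 1, σ x = τ x := by
    intro σ hσc hσeq
    have hσd := hode σ hσc hσeq
    have hv : ∀ ξ : ℝ, LipschitzOnWith K (fun y => -(f ξ y)) (univ : Set ℝ) :=
      fun ξ => (hlipV ξ).lipschitzOnWith
    have hmem : ∀ ξ ∈ Ioc (0:ℝ) 1, Icc (0:ℝ) 1 ∈ 𝓝[Iic ξ] ξ := by
      intro ξ hξ
      exact mem_nhdsWithin.mpr ⟨Ioi 0, isOpen_Ioi, hξ.1,
        fun y hy => ⟨le_of_lt hy.1, le_trans hy.2 hξ.2⟩⟩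
    have h : EqOn σ τ (Icc (0:ℝ) 1) := by
      apply ODE_solution_unique_of_mem_Icc_left (fun ξ _ => hv ξ) hσc ?_ (fun _ _ => trivial) hτc ?_
        (fun _ _ => trivial) ?_
      · intro ξ hξ
        exact (hσd ξ ⟨hξ.1.le, hξ.2⟩).mono_of_mem_nhdsWithin (hmem ξ hξ)
      · intro ξ hξ
        exact (hτd ξ ⟨hξ.1.le, hξ.2⟩).mono_of_mem_nhdsWithin (hmem ξ hξ)
      · have h1 := hσeq 1 h11
        rw [intervalIntegral.integral_same] at h1
        rw [h1, hτ1, add_zero]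
    exact fun x hx => h hx
  exact ⟨τ, hτc, hτeq, hbnd, huniq⟩

end
end

section
/- Let δ > 0, t₀ ∈ ℝ, and b₀, and let a : [t₀, ∞) → ℝ be differentiable with |a′(t)| ≤ δ/2 for all t ≥ t₀ and a(t₀) ≠ b₀. Define b(t) = b₀ + δ · sign(a(t₀) − b₀) · (t − t₀). Then there exists t* with t₀ < t* ≤ t₀ + 2|a(t₀) − b₀|/δ such that b(t*) = a(t*). -/
open Set

noncomputable section

/-- the intersection-time estimate from the proof of Theorem 2.
If `a` is differentiable on `[t₀,∞)` with `|a'(t)| ≤ δ/2`, `a(t₀) ≠ b₀`, and the ramp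
`b(t) = b₀ + δ·sign(a(t₀) - b₀)·(t - t₀)` moves toward `a` at rate `δ`, then the two
curves intersect at some time `t*` with `t₀ < t* ≤ t₀ + 2|a(t₀) - b₀|/δ`. -/
theorem statement11 (δ t0 b0 : ℝ) (hδ : 0 < δ) (a a' : ℝ → ℝ)
    (ha : ∀ t : ℝ, t0 ≤ t → HasDerivAt a (a' t) t)
    (ha' : ∀ t : ℝ, t0 ≤ t → |a' t| ≤ δ / 2)
    (hne : a t0 ≠ b0) :
    ∃ ts : ℝ, t0 < ts ∧ ts ≤ t0 + 2 * |a t0 - b0| / δ ∧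
      b0 + δ * Real.sign (a t0 - b0) * (ts - t0) = a ts := by
  set c := a t0 - b0 with hc
  have hcne : c ≠ 0 := sub_ne_zero.mpr hne
  set T := t0 + 2 * |c| / δ with hT
  have habs : 0 < |c| := abs_pos.mpr hcne
  have htT : t0 ≤ T := le_add_of_nonneg_right (by positivity)
  -- continuity of a on [t0, T]
  have hcontA : ContinuousOn a (Icc t0 T) := fun x hx =>
    (ha x hx.1).continuousAt.continuousWithinAt
  -- MVT bound
  have hmvt : |a T - a t0| ≤ δ / 2 * (T - t0) := by
    have h1 : ∀ x ∈ Icc t0 T, HasDerivWithinAt a (a' x) (Icc t0 T) x := fun x hx =>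
      (ha x hx.1).hasDerivWithinAt
    have h2 : ∀ x ∈ Icc t0 T, ‖a' x‖ ≤ δ / 2 := fun x hx => ha' x hx.1
    have := (convex_Icc t0 T).norm_image_sub_le_of_norm_hasDerivWithin_le h1 h2
      (left_mem_Icc.mpr htT) (right_mem_Icc.mpr htT)
    simpa [Real.norm_eq_abs, abs_of_nonneg (sub_nonneg.mpr htT)] using this
  have hTt0 : T - t0 = 2 * |c| / δ := by ring
  have hmvt' : |a T - a t0| ≤ |c| := by
    rw [hTt0] at hmvt
    calc |a T - a t0| ≤ δ / 2 * (2 * |c| / δ) := hmvt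
    _ = |c| := by field_simp
  rcases lt_or_gt_of_ne hcne with hneg | hpos
  · -- c < 0, sign = -1
    have hsign : Real.sign c = -1 := Real.sign_of_neg hneg
    set f : ℝ → ℝ := fun t => a t - (b0 - δ * (t - t0)) with hf
    have hcontf : ContinuousOn f (Icc t0 T) := by
      apply hcontA.sub
      fun_prop
    have hft0 : f t0 = c := by simp only [hf]; rw [hc]; ring
    have hfT : 0 ≤ f T := by
      have habs2 : |c| = -c := abs_of_neg hneg
      have h1 : a T - a t0 ≥ -|c| := neg_le_of_abs_le hmvt'
      have hδT : δ * (T - t0) = 2 * |c| := by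
        rw [hTt0]; field_simp
      have : f T = (a T - a t0) + c + δ * (T - t0) := by simp only [hf]; rw [hc]; ring
      rw [this, hδT]
      linarith [h1]
    have h0mem : (0:ℝ) ∈ Icc (f t0) (f T) := ⟨by rw [hft0]; linarith, hfT⟩
    obtain ⟨ts, hts, hfts⟩ := intermediate_value_Icc htT hcontf h0mem
    refine ⟨ts, ?_, hts.2, ?_⟩
    · rcases hts.1.lt_or_eq with h | h
      · exact h
      · exfalso; rw [← h] at hfts; rw [hft0] at hfts; exact hcne (by linarith)
    · rw [hsign]
      have : a ts = b0 - δ * (ts - t0) := by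
        have := hfts; simp [hf] at this; linarith
      rw [this]; ring
  · -- c > 0, sign = 1
    have hsign : Real.sign c = 1 := Real.sign_of_pos hpos
    set f : ℝ → ℝ := fun t => a t - (b0 + δ * (t - t0)) with hf
    have hcontf : ContinuousOn f (Icc t0 T) := by
      apply hcontA.sub
      fun_prop
    have hft0 : f t0 = c := by simp only [hf]; rw [hc]; ring
    have hfT : f T ≤ 0 := by
      have habs2 : |c| = c := abs_of_pos hpos
      have h1 : a T - a t0 ≤ |c| := le_of_abs_le hmvt'
      have hδT : δ * (T - t0) = 2 * |c| := by
        rw [hTt0]; field_simp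
      have : f T = (a T - a t0) + c - δ * (T - t0) := by simp only [hf]; rw [hc]; ring
      rw [this, hδT]
      linarith [h1]
    have h0mem : (0:ℝ) ∈ Icc (f T) (f t0) := ⟨hfT, by rw [hft0]; linarith⟩
    obtain ⟨ts, hts, hfts⟩ := intermediate_value_Icc' htT hcontf h0mem
    refine ⟨ts, ?_, hts.2, ?_⟩
    · rcases hts.1.lt_or_eq with h | h
      · exact h
      · exfalso; rw [← h] at hfts; rw [hft0] at hfts; exact hcne (by linarith)
    · rw [hsign]
      have : a ts = b0 + δ * (ts - t0) := by
        have := hfts; simp [hf] at this; linarith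
      rw [this]; ring
end
end
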